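/- arXiv:2210.03311 — 9 statements merged into one kernel-verified Lean document; each statement's English description precedes it below -/
import Mathlib

section
/- For positive integers x, y and nonnegative integers a, b, we have (x+y+a)!·b! + (x+y+b)!·a! > (x+a)!·(y+b)! + (x+b)!·(y+a)!. -/
/-!
By symmetry we may assume `a ≤ b`. Put `A = a! (x+y+b)!`, `E = b! (x+y+a)!` and let `B`, `C` be
the two products on the right. Since `(k+n)!/n!` is increasing in `n`, both `B` and `C` are
smaller than `A`, and `B C ≤ A E`. These three facts force `B + C < A + E`, because
`A (A + E) - A (B + C) ≥ (A - B) (A - C) > 0`.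
-/

open Nat

theorem Nat.ascFactorial_lt_ascFactorial {n m k : ℕ} (h : n < m) (hk : 0 < k) :
    n.ascFactorial k < m.ascFactorial k := by
  obtain ⟨j, rfl⟩ := Nat.exists_eq_add_of_lt hk
  obtain ⟨m, rfl⟩ := Nat.exists_eq_add_of_lt (Nat.zero_lt_of_lt h)
  rw [zero_add, ascFactorial_succ, ascFactorial_succ]
  exact Nat.mul_lt_mul_of_lt_of_le (by omega) (ascFactorial_le j h.le)
    (by simpa using ascFactorial_pos m j)

theorem Nat.factorial_mul_factorial_add_le {s t : ℕ} (h : t ≤ s) (k : ℕ) :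
    s ! * (k + t)! ≤ t ! * (k + s)! := by
  rw [add_comm k, add_comm k, ← factorial_mul_ascFactorial t k,
    ← factorial_mul_ascFactorial s k, mul_left_comm]
  gcongr

theorem Nat.factorial_mul_factorial_add_lt {s t k : ℕ} (h : t < s) (hk : 0 < k) :
    s ! * (k + t)! < t ! * (k + s)! := by
  rw [add_comm k, add_comm k, ← factorial_mul_ascFactorial t k,
    ← factorial_mul_ascFactorial s k, mul_left_comm]
  gcongr
  exact ascFactorial_lt_ascFactorial (by omega) hk

theorem add_lt_add_of_mul_le_mul_of_lt_of_lt {R : Type*} [CommSemiring R] [LinearOrder R]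
    [IsStrictOrderedRing R] [ExistsAddOfLE R] {a b c e : R} (hb : 0 ≤ b) (hba : b < a)
    (hca : c < a) (h : b * c ≤ a * e) : b + c < a + e := by
  refine lt_of_mul_lt_mul_left (a := a) ?_ (hb.trans hba.le)
  calc a * (b + c) = b * a + a * c := by ring
    _ < b * c + a * a := mul_add_mul_lt_mul_add_mul hba hca
    _ ≤ a * e + a * a := by gcongr
    _ = a * (a + e) := by ring

/-- Lemma 2.4: for positive integers `x, y` and nonnegative integers `a, b`,
`(x+y+a)!·b! + (x+y+b)!·a! > (x+a)!·(y+b)! + (x+b)!·(y+a)!`. -/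
theorem factorial_sum_inequality (x y a b : ℕ) (hx : 0 < x) (hy : 0 < y) :
    (x + y + a).factorial * b.factorial + (x + y + b).factorial * a.factorial >
      (x + a).factorial * (y + b).factorial + (x + b).factorial * (y + a).factorial := by
  wlog hab : a ≤ b generalizing a b
  · linarith [this b a (le_of_not_ge hab)]
  have hBA : (y + b)! * (x + a)! < a ! * (x + y + b)! := by
    simpa only [← add_assoc] using
      factorial_mul_factorial_add_lt (s := y + b) (t := a) (by omega) hx
  have hCA : (x + b)! * (y + a)! < a ! * (x + y + b)! := by
    simpa only [add_left_comm y x, ← add_assoc] using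
      factorial_mul_factorial_add_lt (s := x + b) (t := a) (by omega) hy
  have hBC : (y + b)! * (x + a)! * ((x + b)! * (y + a)!) ≤
      a ! * (x + y + b)! * (b ! * (x + y + a)!) := by
    have ha := factorial_mul_factorial_add_le (s := y + a) (t := a) (by omega) x
    have hb := factorial_mul_factorial_add_le (s := y + b) (t := b) (by omega) x
    rw [← add_assoc] at ha hb
    calc _ = (y + a)! * (x + a)! * ((y + b)! * (x + b)!) := by ring
      _ ≤ a ! * (x + y + a)! * (b ! * (x + y + b)!) := by gcongr
      _ = _ := by ring
  linarith [add_lt_add_of_mul_le_mul_of_lt_of_lt (zero_le _) hBA hCA hBC]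
end

section
/- For positive integers x, y and nonnegative integers a, b with a ≥ b, x ≥ y, and x + b ≥ a, we have (x+a)!·b!·((x+a+1)···(x+a+y) − (b+1)···(b+y)) + (x+b)!·a!·((x+b+1)···(x+b+y) − (a+1)···(a+y)) ≥ 0, with the first parenthesized factor nonnegative. -/
/-! Each summand is nonnegative on its own: a product of `y` consecutive integers grows with its
starting point, and `b ≤ x + a`, `a ≤ x + b`. -/

open Finset

theorem prod_Icc_add_le_prod_Icc_add {R : Type*} [CommSemiring R] [PartialOrder R]
    [IsOrderedRing R] {c d : ℕ} (h : c ≤ d) (y : ℕ) :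
    ∏ i ∈ Icc (c + 1) (c + y), (i : R) ≤ ∏ i ∈ Icc (d + 1) (d + y), (i : R) := by
  induction y with
  | zero => simp
  | succ y ih =>
    rw [← add_assoc, ← add_assoc, prod_Icc_succ_top (by omega), prod_Icc_succ_top (by omega)]
    gcongr

theorem factorial_rising_product_nonneg_general (x y a b : ℕ)
    (hab : b ≤ a) (hxba : a ≤ x + b) :
    0 ≤ ((x + a).factorial * b.factorial : ℤ) *
          ((∏ i ∈ Finset.Icc (x + a + 1) (x + a + y), (i : ℤ)) -
            ∏ i ∈ Finset.Icc (b + 1) (b + y), (i : ℤ)) +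
        ((x + b).factorial * a.factorial : ℤ) *
          ((∏ i ∈ Finset.Icc (x + b + 1) (x + b + y), (i : ℤ)) -
            ∏ i ∈ Finset.Icc (a + 1) (a + y), (i : ℤ)) ∧
    0 ≤ (∏ i ∈ Finset.Icc (x + a + 1) (x + a + y), (i : ℤ)) -
          ∏ i ∈ Finset.Icc (b + 1) (b + y), (i : ℤ) := by
  have first := sub_nonneg.2 (prod_Icc_add_le_prod_Icc_add (R := ℤ) (by omega : b ≤ x + a) y)
  have second := sub_nonneg.2 (prod_Icc_add_le_prod_Icc_add (R := ℤ) hxba y)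
  exact ⟨add_nonneg (mul_nonneg (by positivity) first) (mul_nonneg (by positivity) second), first⟩

/-- For positive integers `x, y` and nonnegative integers `a, b` with `a ≥ b`, `x ≥ y`
and `x + b ≥ a`:
`(x+a)!·b!·((x+a+1)···(x+a+y) − (b+1)···(b+y)) + (x+b)!·a!·((x+b+1)···(x+b+y) − (a+1)···(a+y)) ≥ 0`,
and the first parenthesized factor is nonnegative. Here `(c+1)···(c+y)` is the product of the
`y` consecutive integers from `c+1` to `c+y`. -/
theorem factorial_rising_product_nonneg (x y a b : ℕ) (hx : 0 < x) (hy : 0 < y)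
    (hab : b ≤ a) (hxy : y ≤ x) (hxba : a ≤ x + b) :
    0 ≤ ((x + a).factorial * b.factorial : ℤ) *
          ((∏ i ∈ Finset.Icc (x + a + 1) (x + a + y), (i : ℤ)) -
            ∏ i ∈ Finset.Icc (b + 1) (b + y), (i : ℤ)) +
        ((x + b).factorial * a.factorial : ℤ) *
          ((∏ i ∈ Finset.Icc (x + b + 1) (x + b + y), (i : ℤ)) -
            ∏ i ∈ Finset.Icc (a + 1) (a + y), (i : ℤ)) ∧
    0 ≤ (∏ i ∈ Finset.Icc (x + a + 1) (x + a + y), (i : ℤ)) -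
          ∏ i ∈ Finset.Icc (b + 1) (b + y), (i : ℤ) :=
  factorial_rising_product_nonneg_general x y a b hab hxba
end

section
/- For positive integers x ≥ y and nonnegative integers a ≥ b, we have (x+a+1)···(x+a+y) − (b+1)···(b+y) > (a+1)···(a+y) − (x+b+1)···(x+b+y). -/
/-! The product `(c+1)···(c+y)` is strictly increasing in `c`, so shifting by `x > 0` gives
`(a+1)···(a+y) < (x+a+1)···(x+a+y)` and `(b+1)···(b+y) < (x+b+1)···(x+b+y)`; add the two. -/

open Finset

theorem Nat.ascFactorial_lt_ascFactorial_left {m n k : ℕ} (hm : 0 < m) (hmn : m < n)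
    (hk : 0 < k) : m.ascFactorial k < n.ascFactorial k := by
  rw [Nat.ascFactorial_eq_prod_range, Nat.ascFactorial_eq_prod_range]
  exact prod_lt_prod_of_nonempty (fun i _ ↦ by omega) (fun i _ ↦ by omega)
    (nonempty_range_iff.mpr hk.ne')

theorem Nat.prod_Icc_eq_ascFactorial (c y : ℕ) :
    ∏ i ∈ Icc (c + 1) (c + y), i = (c + 1).ascFactorial y := by
  rw [← Ico_add_one_right_eq_Icc, prod_Ico_eq_prod_range, Nat.ascFactorial_eq_prod_range,
    show c + y + 1 - (c + 1) = y by omega]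

theorem rising_product_difference_lt_general (x y a b : ℕ) (hx : 0 < x) (hy : 0 < y) :
    (∏ i ∈ Finset.Icc (a + 1) (a + y), (i : ℤ)) -
        ∏ i ∈ Finset.Icc (x + b + 1) (x + b + y), (i : ℤ) <
      (∏ i ∈ Finset.Icc (x + a + 1) (x + a + y), (i : ℤ)) -
        ∏ i ∈ Finset.Icc (b + 1) (b + y), (i : ℤ) := by
  rw [← Nat.cast_prod, ← Nat.cast_prod, ← Nat.cast_prod, ← Nat.cast_prod]
  simp only [Nat.prod_Icc_eq_ascFactorial]
  have ha : (a + 1).ascFactorial y < (x + a + 1).ascFactorial y :=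
    Nat.ascFactorial_lt_ascFactorial_left a.add_one_pos (by omega) hy
  have hb : (b + 1).ascFactorial y < (x + b + 1).ascFactorial y :=
    Nat.ascFactorial_lt_ascFactorial_left b.add_one_pos (by omega) hy
  omega

/-- For positive integers `x ≥ y` and nonnegative integers `a ≥ b`:
`(x+a+1)···(x+a+y) − (b+1)···(b+y) > (a+1)···(a+y) − (x+b+1)···(x+b+y)`,
where `(c+1)···(c+y)` is the product of the `y` consecutive integers from `c+1` to `c+y`. -/
theorem rising_product_difference_lt (x y a b : ℕ) (hx : 0 < x) (hy : 0 < y)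
    (hxy : y ≤ x) (hab : b ≤ a) :
    (∏ i ∈ Finset.Icc (a + 1) (a + y), (i : ℤ)) -
        ∏ i ∈ Finset.Icc (x + b + 1) (x + b + y), (i : ℤ) <
      (∏ i ∈ Finset.Icc (x + a + 1) (x + a + y), (i : ℤ)) -
        ∏ i ∈ Finset.Icc (b + 1) (b + y), (i : ℤ) :=
  rising_product_difference_lt_general x y a b hx hy
end

section
/- Let d, m, n be positive integers with m ≥ 2. If m does not divide d, then the d-th trace of the adjacency tensor of any m-uniform hypertree on n vertices is zero. -/
/-- A (simple) hypergraph: a finite vertex set together with a finite set of edges,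
each of which is a subset of the vertex set. -/
structure FinHypergraph (α : Type*) where
  verts : Finset α
  edges : Finset (Finset α)
  edge_sub : ∀ e ∈ edges, e ⊆ verts

namespace FinHypergraph

variable {α : Type*}

/-- A hypergraph is `m`-uniform if every edge has exactly `m` vertices. -/
def IsUniform (H : FinHypergraph α) (m : ℕ) : Prop := ∀ e ∈ H.edges, e.card = m

/-- A hypergraph is connected if any two of its vertices are joined by a walk,
i.e. related by the reflexive-transitive closure of "lying in a common edge". -/
def Connected (H : FinHypergraph α) : Prop :=
  ∀ u ∈ H.verts, ∀ v ∈ H.verts,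
    Relation.ReflTransGen (fun a b => ∃ e ∈ H.edges, a ∈ e ∧ b ∈ e) u v

/-- `H.IsCycleOn n C` says that `H` contains a cycle of length `n ≥ 2` whose edge set is
exactly `C`: distinct vertices `v 0, …, v (n-1)` and distinct edges `e 0, …, e (n-1)` of
`H` (indexed cyclically) with `v i ∈ e i` and `v (i+1) ∈ e i`. -/
def IsCycleOn (H : FinHypergraph α) (n : ℕ) (C : Finset (Finset α)) : Prop :=
  2 ≤ n ∧ ∃ (v : ZMod n → α) (e : ZMod n → Finset α),
    Function.Injective v ∧ Function.Injective e ∧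
    (∀ i, e i ∈ H.edges) ∧ (∀ i, v i ∈ e i ∧ v (i + 1) ∈ e i) ∧
    (∀ i, e i ∈ C) ∧ ∀ f ∈ C, ∃ i, e i = f

/-- A hypergraph contains a cycle if it has a cycle of some length on some edge set. -/
def HasCycle (H : FinHypergraph α) : Prop := ∃ n C, H.IsCycleOn n C

/-- An `m`-uniform hypertree: an `m`-uniform hypergraph which is connected and acyclic. -/
def IsHypertree (H : FinHypergraph α) (m : ℕ) : Prop :=
  H.IsUniform m ∧ H.Connected ∧ ¬ H.HasCycle

/-- `M` is a perfect matching of `H`: a set of pairwise disjoint edges covering all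
vertices. -/
def IsPerfectMatching (H : FinHypergraph α) (M : Finset (Finset α)) : Prop :=
  M ⊆ H.edges ∧ (∀ e ∈ M, ∀ f ∈ M, e ≠ f → Disjoint e f) ∧
    ∀ v ∈ H.verts, ∃ e ∈ M, v ∈ e

/-- A hypergraph is linear if any two distinct edges meet in at most one vertex. -/
def IsLinear [DecidableEq α] (H : FinHypergraph α) : Prop :=
  ∀ e ∈ H.edges, ∀ f ∈ H.edges, e ≠ f → (e ∩ f).card ≤ 1

end FinHypergraph

/-- Iterated partial derivative `∂/∂a_{i₁} ⋯ ∂/∂a_{i_k}` of a polynomial in the entries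
of an auxiliary `n × n` matrix of variables. -/
noncomputable def msDeriv {n : ℕ} (idxs : List (Fin n × Fin n))
    (p : MvPolynomial (Fin n × Fin n) ℚ) : MvPolynomial (Fin n × Fin n) ℚ :=
  idxs.foldr (fun a q => MvPolynomial.pderiv a q) p

/-- The Morozov–Shakirov differential operator `Σ_{y ∈ [n]^{m−1}} t_{i y} ∂/∂a_{i y}`
attached to an order-`m` dimension-`n` tensor `t` and an index `i`. -/
noncomputable def msOp {m n : ℕ} (t : Fin n → (Fin (m - 1) → Fin n) → ℚ) (i : Fin n)
    (p : MvPolynomial (Fin n × Fin n) ℚ) : MvPolynomial (Fin n × Fin n) ℚ :=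
  ∑ y : Fin (m - 1) → Fin n, t i y • msDeriv (List.ofFn fun j => (i, y j)) p

/-- The trace of the `d`-th power of the auxiliary `n × n` matrix `A = (a_{ij})` of
variables, as a polynomial. -/
noncomputable def auxTracePoly (n d : ℕ) : MvPolynomial (Fin n × Fin n) ℚ :=
  Matrix.trace
    ((Matrix.of fun i j : Fin n =>
        (MvPolynomial.X (i, j) : MvPolynomial (Fin n × Fin n) ℚ)) ^ d)

/-- The `d`-th Morozov–Shakirov trace of an order-`m`, dimension-`n` tensor `t`:
`Tr_d(t) = (m−1)^{n−1} Σ_{d₁+⋯+d_n=d} Π_i (dᵢ(m−1))!⁻¹ ·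
  (Π_i (Σ_{yᵢ} t_{i yᵢ} ∂/∂a_{i yᵢ})^{dᵢ}) Tr(A^{d(m−1)})`,
evaluated at `a = 0` (the constant coefficient). -/
noncomputable def msTrace (m n d : ℕ) (t : Fin n → (Fin (m - 1) → Fin n) → ℚ) : ℚ :=
  (((m - 1) ^ (n - 1) : ℕ) : ℚ) *
    ∑ dv ∈ Finset.Nat.antidiagonalTuple n d,
      (∏ i, (1 : ℚ) / ((dv i * (m - 1)).factorial : ℚ)) *
        MvPolynomial.constantCoeff
          ((List.finRange n).foldr (fun i p => (msOp t i)^[dv i] p)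
            (auxTracePoly n (d * (m - 1))))

/-- The adjacency tensor of an `m`-uniform hypergraph on the vertex set `Fin n` with
edge set `E`: `a_{i₁ … i_m} = 1/(m−1)!` if `{i₁, …, i_m}` is an edge (the indices being
pairwise distinct) and `0` otherwise. -/
noncomputable def adjTensor (m n : ℕ) (E : Finset (Finset (Fin n))) :
    Fin n → (Fin (m - 1) → Fin n) → ℚ := fun i y =>
  if insert i (Finset.image y Finset.univ) ∈ E ∧
      (insert i (Finset.image y Finset.univ)).card = m
  then 1 / ((m - 1).factorial : ℚ) else 0


namespace HTT

open MvPolynomial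

variable {m n : ℕ}

/-- weight of a monomial exponent vector -/
noncomputable def W (w : Fin n × Fin n → ZMod m) (σ : (Fin n × Fin n) →₀ ℕ) : ZMod m :=
  ∑ p : Fin n × Fin n, σ p • w p

lemma W_add (w : Fin n × Fin n → ZMod m) (σ τ) : W w (σ + τ) = W w σ + W w τ := by
  simp [W, add_smul, Finset.sum_add_distrib]

lemma W_single (w : Fin n × Fin n → ZMod m) (p) (k : ℕ) :
    W w (Finsupp.single p k) = k • w p := by
  rw [W, Finset.sum_eq_single p]
  · simp
  · intro q _ hq; simp [Finsupp.single_apply, Ne.symm hq]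
  · simp

lemma W_zero (w : Fin n × Fin n → ZMod m) : W w 0 = 0 := by simp [W]

/-- every monomial of `q` has weight `c` -/
def HomWt (w : Fin n × Fin n → ZMod m) (c : ZMod m)
    (q : MvPolynomial (Fin n × Fin n) ℚ) : Prop :=
  ∀ σ, MvPolynomial.coeff σ q ≠ 0 → W w σ = c

variable {w : Fin n × Fin n → ZMod m}

lemma HomWt.zero (c : ZMod m) : HomWt w c (0 : MvPolynomial (Fin n × Fin n) ℚ) := by
  intro σ hσ; simp at hσ

lemma HomWt.add {c q r} (hq : HomWt w c q) (hr : HomWt w c r) : HomWt w c (q + r) := by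
  intro σ hσ
  rw [coeff_add] at hσ
  rcases eq_or_ne (coeff σ q) 0 with h | h
  · exact hr σ (by simpa [h] using hσ)
  · exact hq σ h

lemma HomWt.sum {c} {ι : Type*} (s : Finset ι) (g : ι → MvPolynomial (Fin n × Fin n) ℚ)
    (h : ∀ i ∈ s, HomWt w c (g i)) : HomWt w c (∑ i ∈ s, g i) := by
  classical
  induction s using Finset.induction_on with
  | empty => simpa using HomWt.zero c
  | insert a s hni ih =>
    rw [Finset.sum_insert hni]
    exact (h a (Finset.mem_insert_self a s)).add
      (ih fun i hi => h i (Finset.mem_insert_of_mem hi))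

lemma HomWt.smul {c q} (a : ℚ) (hq : HomWt w c q) : HomWt w c (a • q) := by
  intro σ hσ
  rw [coeff_smul] at hσ
  exact hq σ (by intro h; apply hσ; simp [h])

lemma HomWt.mul {a b : ZMod m} {q r} (hq : HomWt w a q) (hr : HomWt w b r) :
    HomWt w (a + b) (q * r) := by
  intro σ hσ
  rw [coeff_mul] at hσ
  obtain ⟨⟨σ₁, σ₂⟩, hmem, hne⟩ := Finset.exists_ne_zero_of_sum_ne_zero hσ
  rw [Finset.HasAntidiagonal.mem_antidiagonal] at hmem
  rcases mul_ne_zero_iff.mp hne with ⟨h1, h2⟩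
  rw [← hmem, W_add, hq _ h1, hr _ h2]

lemma HomWt.one : HomWt w 0 (1 : MvPolynomial (Fin n × Fin n) ℚ) := by
  intro σ hσ
  rcases eq_or_ne σ 0 with rfl | h
  · exact W_zero w
  · exact absurd (by simp [coeff_one, Ne.symm h]) hσ

lemma HomWt.X (p : Fin n × Fin n) : HomWt w (w p) (MvPolynomial.X p) := by
  intro σ hσ
  rw [coeff_X'] at hσ
  split at hσ
  · next h => rw [← h, W_single]; simp
  · exact absurd rfl hσ

lemma HomWt.monomial {c : ZMod m} (τ : (Fin n × Fin n) →₀ ℕ) (a : ℚ)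
    (h : a ≠ 0 → W w τ = c) : HomWt w c (MvPolynomial.monomial τ a) := by
  intro ρ hρ
  rw [coeff_monomial] at hρ
  split at hρ
  · next he => rw [← he]; exact h hρ
  · exact absurd rfl hρ

lemma HomWt.pderiv {c q} (hq : HomWt w c q) (p : Fin n × Fin n) :
    HomWt w (c - w p) (MvPolynomial.pderiv p q) := by
  classical
  have hrw : MvPolynomial.pderiv p q =
      ∑ σ ∈ q.support, MvPolynomial.pderiv p (MvPolynomial.monomial σ (coeff σ q)) := by
    rw [← map_sum, q.support_sum_monomial_coeff]
  rw [hrw]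
  apply HomWt.sum
  intro σ hσ
  rw [pderiv_monomial]
  apply HomWt.monomial
  intro ha
  rcases mul_ne_zero_iff.mp ha with ⟨h1, h2⟩
  have hp1 : 1 ≤ σ p := by
    by_contra h
    exact h2 (by simp [Nat.lt_one_iff.mp (not_le.mp h)])
  have hsub : σ - Finsupp.single p 1 + Finsupp.single p 1 = σ :=
    tsub_add_cancel_of_le (Finsupp.single_le_iff.mpr hp1)
  have := W_add w (σ - Finsupp.single p 1) (Finsupp.single p 1)
  rw [hsub, hq σ h1, W_single] at this
  rw [eq_sub_iff_add_eq]
  rw [this]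
  simp


lemma homWt_pow_entry (f : Fin n → ZMod m) (ℓ : ℕ) (i j : Fin n) :
    HomWt (fun p => f p.2 - f p.1) (f j - f i)
      (((Matrix.of fun a b : Fin n =>
        (MvPolynomial.X (a, b) : MvPolynomial (Fin n × Fin n) ℚ)) ^ ℓ) i j) := by
  induction ℓ generalizing i j with
  | zero =>
    rw [pow_zero]
    rcases eq_or_ne i j with rfl | h
    · rw [Matrix.one_apply_eq]
      simpa using (HomWt.one (w := fun p : Fin n × Fin n => f p.2 - f p.1))
    · rw [Matrix.one_apply_ne h]
      exact HomWt.zero _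
  | succ ℓ ih =>
    rw [pow_succ, Matrix.mul_apply]
    apply HomWt.sum
    intro k _
    have h2 := HomWt.X (w := fun p : Fin n × Fin n => f p.2 - f p.1) (k, j)
    have := (ih i k).mul h2
    have he : (f k - f i) + (f j - f k) = f j - f i := by ring
    rw [he] at this
    simpa using this

lemma homWt_auxTracePoly (f : Fin n → ZMod m) (ℓ : ℕ) :
    HomWt (fun p => f p.2 - f p.1) 0 (auxTracePoly n ℓ) := by
  unfold auxTracePoly
  rw [Matrix.trace]
  apply HomWt.sum
  intro i _
  have := homWt_pow_entry f ℓ i i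
  simpa using this

lemma homWt_msDeriv {c q} (hq : HomWt w c q) (l : List (Fin n × Fin n)) :
    HomWt w (c - (l.map w).sum) (_root_.msDeriv l q) := by
  induction l with
  | nil => simpa [msDeriv] using hq
  | cons a l ih =>
    have : _root_.msDeriv (a :: l) q = MvPolynomial.pderiv a (_root_.msDeriv l q) := rfl
    rw [this]
    have := ih.pderiv a
    have he : c - (l.map w).sum - w a = c - ((a :: l).map w).sum := by
      simp; ring
    rwa [he] at this

lemma homWt_msOp {c q} (t : Fin n → (Fin (m - 1) → Fin n) → ℚ)
    (ht : ∀ i y, t i y ≠ 0 → (∑ j : Fin (m - 1), (w (i, y j))) = 1)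
    (i : Fin n) (hq : HomWt w c q) : HomWt w (c - 1) (_root_.msOp t i q) := by
  unfold _root_.msOp
  apply HomWt.sum
  intro y _
  rcases eq_or_ne (t i y) 0 with h0 | h0
  · rw [h0, zero_smul]; exact HomWt.zero _
  · apply HomWt.smul
    have := homWt_msDeriv hq (List.ofFn fun j => (i, y j))
    have he : ((List.ofFn fun j => (i, y j)).map w).sum = 1 := by
      rw [List.map_ofFn, List.sum_ofFn, ← ht i y h0]
      rfl
    rwa [he] at this

lemma homWt_msOp_iterate {c q} (t : Fin n → (Fin (m - 1) → Fin n) → ℚ)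
    (ht : ∀ i y, t i y ≠ 0 → (∑ j : Fin (m - 1), (w (i, y j))) = 1)
    (i : Fin n) (k : ℕ) (hq : HomWt w c q) :
    HomWt w (c - k) ((_root_.msOp t i)^[k] q) := by
  induction k generalizing c q with
  | zero => simpa using hq
  | succ k ih =>
    rw [Function.iterate_succ_apply']
    have := homWt_msOp t ht i (ih hq)
    have he : c - k - 1 = c - (k + 1 : ℕ) := by push_cast; ring
    rwa [he] at this

lemma homWt_foldr {c q} (t : Fin n → (Fin (m - 1) → Fin n) → ℚ)
    (ht : ∀ i y, t i y ≠ 0 → (∑ j : Fin (m - 1), (w (i, y j))) = 1)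
    (dv : Fin n → ℕ) (l : List (Fin n)) (hq : HomWt w c q) :
    HomWt w (c - ((l.map fun i => ((dv i : ℕ) : ZMod m)).sum))
      (l.foldr (fun i p => (_root_.msOp t i)^[dv i] p) q) := by
  induction l with
  | nil => simpa using hq
  | cons a l ih =>
    rw [List.foldr_cons]
    have := homWt_msOp_iterate t ht a (dv a) ih
    have he : c - ((l.map fun i => ((dv i : ℕ) : ZMod m)).sum) - dv a
        = c - (((a :: l).map fun i => ((dv i : ℕ) : ZMod m)).sum) := by
      simp; ring
    rwa [he] at this


theorem msTrace_eq_zero {m n d : ℕ} (hm : 2 ≤ m) (hnd : ¬ m ∣ d)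
    (t : Fin n → (Fin (m - 1) → Fin n) → ℚ) (f : Fin n → ZMod m)
    (ht : ∀ i y, t i y ≠ 0 →
      (∑ j : Fin (m - 1), (f (y j) - f i)) = 1) :
    _root_.msTrace m n d t = 0 := by
  haveI : NeZero m := ⟨by omega⟩
  unfold _root_.msTrace
  rw [mul_eq_zero]
  right
  apply Finset.sum_eq_zero
  intro dv hdv
  rw [Finset.Nat.mem_antidiagonalTuple] at hdv
  suffices h : MvPolynomial.constantCoeff
      ((List.finRange n).foldr (fun i p => (_root_.msOp t i)^[dv i] p)
        (auxTracePoly n (d * (m - 1)))) = 0 by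
    rw [h, mul_zero]
  by_contra hc
  set w : Fin n × Fin n → ZMod m := fun p => f p.2 - f p.1 with hw
  have h0 := homWt_foldr (w := w) t
    (fun i y hne => by simpa [hw] using ht i y hne) dv (List.finRange n)
    (homWt_auxTracePoly f (d * (m - 1)))
  have hsum : (((List.finRange n).map fun i => ((dv i : ℕ) : ZMod m)).sum)
      = (d : ZMod m) := by
    rw [← Fin.sum_univ_def, ← Nat.cast_sum, hdv]
  rw [hsum] at h0
  rw [MvPolynomial.constantCoeff_eq] at hc
  have := h0 0 hc
  rw [W_zero] at this
  have hd0 : (d : ZMod m) = 0 := by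
    rw [zero_sub] at this
    exact neg_eq_zero.mp this.symm
  exact hnd ((ZMod.natCast_eq_zero_iff d m).mp hd0)

theorem adj_cond {m n : ℕ} (hm : 2 ≤ m) (E : Finset (Finset (Fin n)))
    (f : Fin n → ZMod m) (hf : ∀ e ∈ E, ∑ v ∈ e, f v = 1)
    (hunif : ∀ e ∈ E, e.card = m) :
    ∀ i y, adjTensor m n E i y ≠ 0 →
      (∑ j : Fin (m - 1), (f (y j) - f i)) = 1 := by
  intro i y hne
  unfold _root_.adjTensor at hne
  split at hne
  case isFalse => exact absurd rfl hne
  case isTrue h =>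
  obtain ⟨hE, hcard⟩ := h
  set S := Finset.image y Finset.univ with hS
  have hSle : S.card ≤ m - 1 := by
    calc S.card ≤ Fintype.card (Fin (m - 1)) := by
          simpa using Finset.card_image_le (s := (Finset.univ : Finset (Fin (m-1)))) (f := y)
    _ = m - 1 := Fintype.card_fin _
  have hiS : i ∉ S := by
    intro hmem
    rw [Finset.insert_eq_self.mpr hmem] at hcard
    omega
  have hScard : S.card = m - 1 := by
    rw [Finset.card_insert_of_notMem hiS] at hcard
    omega
  have hinj : ∀ a ∈ (Finset.univ : Finset (Fin (m-1))), ∀ b ∈ Finset.univ,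
      y a = y b → a = b := by
    have := Finset.card_image_iff.mp (by rw [← hS, hScard]; simp)
    intro a ha b hb hab
    exact this (by simp) (by simp) hab
  have hsumS : ∑ v ∈ S, f v = ∑ j : Fin (m - 1), f (y j) := by
    rw [hS, Finset.sum_image hinj]
  have hedge : f i + ∑ v ∈ S, f v = 1 := by
    rw [← Finset.sum_insert hiS]
    exact hf _ hE
  have hcast : ((m - 1 : ℕ) : ZMod m) = -1 := by
    have h1 : (((m - 1) + 1 : ℕ) : ZMod m) = 0 := by
      rw [show m - 1 + 1 = m from by omega, ZMod.natCast_self]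
    push_cast at h1
    linear_combination h1
  rw [Finset.sum_sub_distrib, ← hsumS, Finset.sum_const, Finset.card_univ, Fintype.card_fin,
    nsmul_eq_mul, hcast]
  linear_combination hedge


/-- acyclicity of an edge set, unfolded form -/
def Acyc {n : ℕ} (E : Finset (Finset (Fin n))) : Prop :=
  ∀ (L : ℕ), 2 ≤ L → ∀ (v : ZMod L → Fin n) (e : ZMod L → Finset (Fin n)),
    Function.Injective v → Function.Injective e →
    (∀ i, e i ∈ E) → (∀ i, v i ∈ e i ∧ v (i + 1) ∈ e i) → False

lemma exists_private {n : ℕ} (E : Finset (Finset (Fin n))) (hne : E.Nonempty)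
    (hE2 : ∀ e ∈ E, 2 ≤ e.card) (hac : Acyc E) :
    ∃ e ∈ E, ∃ v ∈ e, ∀ f ∈ E, v ∈ f → f = e := by
  classical
  by_contra hcon
  push_neg at hcon
  -- hcon : ∀ e ∈ E, ∀ v ∈ e, ∃ f ∈ E, v ∈ f ∧ f ≠ e
  set S := {p : Fin n × Finset (Fin n) // p.2 ∈ E ∧ p.1 ∈ p.2} with hSdef
  have key : ∀ p : S, ∃ q : S, p.1.1 ∈ q.1.2 ∧ q.1.2 ≠ p.1.2 ∧ q.1.1 ≠ p.1.1 := by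
    rintro ⟨⟨v, e⟩, heE, hve⟩
    obtain ⟨f, hfE, hvf, hfne⟩ := hcon e heE v hve
    obtain ⟨v', hv'f, hv'ne⟩ := Finset.exists_mem_ne
      (s := f) (by have := hE2 f hfE; omega) v
    exact ⟨⟨(v', f), hfE, hv'f⟩, hvf, hfne, hv'ne⟩
  choose step h1 h2 h3 using key
  obtain ⟨e₀, he₀⟩ := hne
  obtain ⟨v₀, hv₀⟩ := (Finset.card_pos (s := e₀)).mp (by have := hE2 e₀ he₀; omega)
  set s : ℕ → S := fun k => step^[k] ⟨(v₀, e₀), he₀, hv₀⟩ with hs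
  have hsucc : ∀ k, s (k + 1) = step (s k) := fun k => Function.iterate_succ_apply' _ _ _
  set V : ℕ → Fin n := fun k => (s k).1.1 with hV
  set Ed : ℕ → Finset (Fin n) := fun k => (s k).1.2 with hEd
  have hstep1 : ∀ k, V k ∈ Ed (k + 1) := fun k => by
    show (s k).1.1 ∈ (s (k + 1)).1.2
    rw [hsucc k]; exact h1 (s k)
  have hstep2 : ∀ k, Ed (k + 1) ≠ Ed k := fun k => by
    show (s (k + 1)).1.2 ≠ (s k).1.2
    rw [hsucc k]; exact h2 (s k)
  have hstep3 : ∀ k, V (k + 1) ≠ V k := fun k => by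
    show (s (k + 1)).1.1 ≠ (s k).1.1
    rw [hsucc k]; exact h3 (s k)
  have hinv : ∀ k, Ed k ∈ E ∧ V k ∈ Ed k := fun k => (s k).2
  -- pigeonhole
  have hfin : Finite S := by infer_instance
  obtain ⟨a, b, hab, hsab⟩ := Finite.exists_ne_map_eq_of_infinite s
  set P : ℕ → Prop := fun g => 0 < g ∧ ∃ i, (V i = V (i + g) ∨ Ed i = Ed (i + g)) with hP
  have hPex : ∃ g, P g := by
    rcases Nat.lt_or_ge a b with h | h
    · refine ⟨b - a, by omega, a, Or.inl ?_⟩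
      show (s a).1.1 = (s (a + (b - a))).1.1
      rw [show a + (b - a) = b from by omega, hsab]
    · have h' : b < a := lt_of_le_of_ne h (Ne.symm hab)
      refine ⟨a - b, by omega, b, Or.inl ?_⟩
      show (s b).1.1 = (s (b + (a - b))).1.1
      rw [show b + (a - b) = a from by omega, ← hsab]
  set L := Nat.find hPex with hLdef
  have hPL : P L := Nat.find_spec hPex
  have hmin : ∀ g, g < L → ¬ P g := fun g hg => Nat.find_min hPex hg
  have hL2 : 2 ≤ L := by
    rcases hPL with ⟨hL0, i, hco⟩
    by_contra h
    have : L = 1 := by omega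
    rw [this] at hco
    rcases hco with hco | hco
    · exact hstep3 i hco.symm
    · exact hstep2 i hco.symm
  obtain ⟨-, i, hco⟩ := hPL
  have hwrap : V i ∈ Ed (i + L) := by
    rcases hco with hco | hco
    · rw [hco]; exact (hinv (i + L)).2
    · rw [← hco]; exact (hinv i).2
  -- helper for injectivity
  have helper : ∀ a b : ℕ, a < L → b < L →
      (V (i + a) = V (i + b) ∨ Ed (i + a + 1) = Ed (i + b + 1)) → a = b := by
    intro a b ha hb hcoab
    by_contra hne'
    rcases Nat.lt_trichotomy a b with h | h | h
    · apply hmin (b - a) (by omega)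
      refine ⟨by omega, ?_⟩
      rcases hcoab with hc | hc
      · exact ⟨i + a, Or.inl (by rw [show i + a + (b - a) = i + b from by omega]; exact hc)⟩
      · exact ⟨i + a + 1, Or.inr (by rw [show i + a + 1 + (b - a) = i + b + 1 from by omega]; exact hc)⟩
    · exact hne' h
    · apply hmin (a - b) (by omega)
      refine ⟨by omega, ?_⟩
      rcases hcoab with hc | hc
      · exact ⟨i + b, Or.inl (by rw [show i + b + (a - b) = i + a from by omega]; exact hc.symm)⟩
      · exact ⟨i + b + 1, Or.inr (by rw [show i + b + 1 + (a - b) = i + a + 1 from by omega]; exact hc.symm)⟩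
  haveI : NeZero L := ⟨by omega⟩
  haveI : Fact (1 < L) := ⟨by omega⟩
  set Vc : ZMod L → Fin n := fun k => V (i + k.val) with hVc
  set Ec : ZMod L → Finset (Fin n) := fun k => Ed (i + k.val + 1) with hEc
  have hVinj : Function.Injective Vc := by
    intro a b hab
    exact ZMod.val_injective L
      (helper a.val b.val (ZMod.val_lt a) (ZMod.val_lt b) (Or.inl hab))
  have hEinj : Function.Injective Ec := by
    intro a b hab
    exact ZMod.val_injective L
      (helper a.val b.val (ZMod.val_lt a) (ZMod.val_lt b) (Or.inr hab))
  apply hac L hL2 Vc Ec hVinj hEinj (fun k => (hinv _).1)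
  intro k
  constructor
  · exact hstep1 _
  · have hvadd : (k + 1).val = (k.val + 1) % L := by
      rw [ZMod.val_add, ZMod.val_one]
    rcases Nat.lt_or_ge (k.val + 1) L with h | h
    · have hv1 : (k + 1).val = k.val + 1 := by rw [hvadd, Nat.mod_eq_of_lt h]
      show V (i + (k + 1).val) ∈ Ed (i + k.val + 1)
      rw [hv1, show i + (k.val + 1) = i + k.val + 1 from by omega]
      exact (hinv _).2
    · have hkL : k.val + 1 = L := by have := ZMod.val_lt k; omega
      have hv1 : (k + 1).val = 0 := by rw [hvadd, hkL, Nat.mod_self]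
      show V (i + (k + 1).val) ∈ Ed (i + k.val + 1)
      rw [hv1, Nat.add_zero, show i + k.val + 1 = i + L from by omega]
      exact hwrap

lemma exists_f {n m : ℕ} :
    ∀ (E : Finset (Finset (Fin n))), (∀ e ∈ E, 2 ≤ e.card) → Acyc E →
      ∃ f : Fin n → ZMod m, ∀ e ∈ E, ∑ v ∈ e, f v = 1 := by
  intro E
  induction E using Finset.strongInduction with
  | _ E ih =>
    intro hE2 hac
    rcases E.eq_empty_or_nonempty with rfl | hne
    · exact ⟨0, by simp⟩
    obtain ⟨e₀, he₀, v₀, hv₀, hpriv⟩ := exists_private E hne hE2 hac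
    have hss : E.erase e₀ ⊂ E := Finset.erase_ssubset he₀
    obtain ⟨f, hf⟩ := ih _ hss (fun e he => hE2 e (Finset.mem_of_mem_erase he))
      (fun L hL v e hv hee hmem hinc =>
        hac L hL v e hv hee (fun i => Finset.mem_of_mem_erase (hmem i)) hinc)
    refine ⟨Function.update f v₀ (1 - ∑ u ∈ e₀.erase v₀, f u), ?_⟩
    intro e he
    rcases eq_or_ne e e₀ with rfl | hnee
    · rw [← Finset.add_sum_erase _ _ hv₀, Function.update_self]
      have hrest : ∑ u ∈ e.erase v₀, Function.update f v₀ (1 - ∑ u ∈ e.erase v₀, f u) u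
          = ∑ u ∈ e.erase v₀, f u :=
        Finset.sum_congr rfl fun u hu =>
          Function.update_of_ne (Finset.ne_of_mem_erase hu) _ _
      rw [hrest]
      ring
    · have hv₀e : v₀ ∉ e := fun hmem => hnee (hpriv e he hmem)
      have hrest : ∑ u ∈ e, Function.update f v₀ (1 - ∑ u ∈ e₀.erase v₀, f u) u
          = ∑ u ∈ e, f u :=
        Finset.sum_congr rfl fun u hu =>
          Function.update_of_ne (fun h => hv₀e (by rw [← h]; exact hu)) _ _
      rw [hrest]
      exact hf e (Finset.mem_erase.mpr ⟨hnee, he⟩)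


end HTT

/-- Let `d, m, n` be positive integers with `m ≥ 2`. If `m` does not divide `d`, then
the `d`-th trace of the adjacency tensor of any `m`-uniform hypertree on `n` vertices is
zero. -/
theorem hypertree_trace_eq_zero_of_not_dvd (d m n : ℕ) (hd : 0 < d) (hm : 2 ≤ m)
    (hn : 0 < n) (H : FinHypergraph (Fin n)) (hverts : H.verts = Finset.univ)
    (hT : H.IsHypertree m) (hnd : ¬ m ∣ d) :
    msTrace m n d (adjTensor m n H.edges) = 0 := by
  obtain ⟨hunif, hconn, hnocyc⟩ := hT
  have hac : HTT.Acyc H.edges := by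
    intro L hL v e hv he hmem hinc
    apply hnocyc
    obtain ⟨L', rfl⟩ : ∃ L', L = L' + 1 := ⟨L - 1, by omega⟩
    refine ⟨L' + 1, Finset.image e Finset.univ, hL, v, e, hv, he, hmem, hinc,
      fun i => Finset.mem_image_of_mem e (Finset.mem_univ i), fun f hf => ?_⟩
    obtain ⟨i, _, rfl⟩ := Finset.mem_image.mp hf
    exact ⟨i, rfl⟩
  have hE2 : ∀ e ∈ H.edges, 2 ≤ e.card := fun e he => (hunif e he) ▸ hm
  obtain ⟨f, hf⟩ := HTT.exists_f (m := m) H.edges hE2 hac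
  exact HTT.msTrace_eq_zero hm hnd _ f (HTT.adj_cond hm H.edges f hf hunif)
end

section
/- Every m-uniform hypertree that has a perfect matching has exactly one perfect matching. -/
/-- Every `m`-uniform hypertree that has a perfect matching has exactly one perfect
matching. -/
theorem hypertree_perfectMatching_unique {α : Type*} (m : ℕ) (hm : 2 ≤ m)
    (H : FinHypergraph α) (hT : H.IsHypertree m) (M M' : Finset (Finset α))
    (hM : H.IsPerfectMatching M) (hM' : H.IsPerfectMatching M') : M = M' := by
  classical
  by_contra hMM
  obtain ⟨hu, -, hnc⟩ := hT
  obtain ⟨hMe, hMd, hMc⟩ := hM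
  obtain ⟨hMe', hMd', hMc'⟩ := hM'
  have uM : ∀ (x : α) e f, e ∈ M → f ∈ M → x ∈ e → x ∈ f → e = f := by
    intro x e f he hf hxe hxf
    by_contra h
    exact Finset.disjoint_left.mp (hMd e he f hf h) hxe hxf
  have uM' : ∀ (x : α) e f, e ∈ M' → f ∈ M' → x ∈ e → x ∈ f → e = f := by
    intro x e f he hf hxe hxf
    by_contra h
    exact Finset.disjoint_left.mp (hMd' e he f hf h) hxe hxf
  have hS0 : ∃ e : Finset α, (e ∈ M ∧ e ∉ M') ∨ (e ∈ M' ∧ e ∉ M) := by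
    by_contra h
    push_neg at h
    apply hMM
    ext e
    have h1 := h e
    tauto
  obtain ⟨e0, he0⟩ := hS0
  have he0E : e0 ∈ H.edges := by rcases he0 with ⟨h, -⟩ | ⟨h, -⟩; exacts [hMe h, hMe' h]
  obtain ⟨v0, hv0⟩ : ∃ v, v ∈ e0 := by
    have hc := hu e0 he0E
    have hc2 : 0 < e0.card := by omega
    obtain ⟨v, hv⟩ := Finset.card_pos.mp hc2
    exact ⟨v, hv⟩
  have step : ∀ q : {q : Finset α × α //
        ((q.1 ∈ M ∧ q.1 ∉ M') ∨ (q.1 ∈ M' ∧ q.1 ∉ M)) ∧ q.2 ∈ q.1},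
      ∃ q' : {q : Finset α × α //
        ((q.1 ∈ M ∧ q.1 ∉ M') ∨ (q.1 ∈ M' ∧ q.1 ∉ M)) ∧ q.2 ∈ q.1},
      q.1.2 ∈ q'.1.1 ∧ q'.1.2 ∉ q.1.1 ∧ (q.1.1 ∈ M ↔ q'.1.1 ∈ M') := by
    rintro ⟨⟨e, v⟩, hSe, hve⟩
    have heE : e ∈ H.edges := by rcases hSe with ⟨h, -⟩ | ⟨h, -⟩; exacts [hMe h, hMe' h]
    have hvV : v ∈ H.verts := H.edge_sub e heE hve
    rcases hSe with ⟨heM, heM'⟩ | ⟨heM', heM⟩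
    · obtain ⟨f, hfM', hvf⟩ := hMc' v hvV
      have hfe : f ≠ e := fun h => heM' (h ▸ hfM')
      have hfM : f ∉ M := fun hfM => hfe (uM v f e hfM heM hvf hve)
      have hfeE : f ∈ H.edges := hMe' hfM'
      have hcard : f.card = e.card := by rw [hu e heE, hu f hfeE]
      obtain ⟨u, huf, hue⟩ : ∃ u ∈ f, u ∉ e := by
        by_contra h
        push_neg at h
        exact hfe (Finset.eq_of_subset_of_card_le h hcard.ge)
      exact ⟨⟨⟨f, u⟩, Or.inr ⟨hfM', hfM⟩, huf⟩, hvf, hue, by simp [heM, hfM']⟩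
    · obtain ⟨f, hfM, hvf⟩ := hMc v hvV
      have hfe : f ≠ e := fun h => heM (h ▸ hfM)
      have hfM' : f ∉ M' := fun hf' => hfe (uM' v f e hf' heM' hvf hve)
      have hfeE : f ∈ H.edges := hMe hfM
      have hcard : f.card = e.card := by rw [hu e heE, hu f hfeE]
      obtain ⟨u, huf, hue⟩ : ∃ u ∈ f, u ∉ e := by
        by_contra h
        push_neg at h
        exact hfe (Finset.eq_of_subset_of_card_le h hcard.ge)
      exact ⟨⟨⟨f, u⟩, Or.inl ⟨hfM, hfM'⟩, huf⟩, hvf, hue, by simp [heM, hfM']⟩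
  choose nxt hnxt using step
  set q0 : {q : Finset α × α //
      ((q.1 ∈ M ∧ q.1 ∉ M') ∨ (q.1 ∈ M' ∧ q.1 ∉ M)) ∧ q.2 ∈ q.1} :=
    ⟨(e0, v0), he0, hv0⟩ with hq0
  set p := fun k => nxt^[k] q0 with hp
  set g : ℕ → Finset α := fun k => (p k).1.1 with hgdef
  set w : ℕ → α := fun k => (p k).1.2 with hwdef
  have hps : ∀ k, p (k + 1) = nxt (p k) := fun k => Function.iterate_succ_apply' nxt k q0
  have hstep : ∀ k, w k ∈ g (k + 1) ∧ w (k + 1) ∉ g k ∧ (g k ∈ M ↔ g (k + 1) ∈ M') := by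
    intro k
    have h := hnxt (p k)
    rw [← hps k] at h
    exact h
  have hS : ∀ k, (g k ∈ M ∧ g k ∉ M') ∨ (g k ∈ M' ∧ g k ∉ M) := fun k => (p k).2.1
  have hwg : ∀ k, w k ∈ g k := fun k => (p k).2.2
  have hgE : ∀ k, g k ∈ H.edges := by
    intro k
    rcases hS k with ⟨h, -⟩ | ⟨h, -⟩
    exacts [hMe h, hMe' h]
  have hQ : ∃ b, ∃ a, a < b ∧ g a = g b := by
    obtain ⟨a, -, b, -, hab, heq⟩ := Finset.exists_ne_map_eq_of_card_lt_of_maps_to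
      (s := Finset.range ((M ∪ M').card + 1)) (t := M ∪ M') (f := g)
      (by simp)
      (fun k _ => by
        rcases hS k with ⟨h, -⟩ | ⟨h, -⟩ <;> simp [Finset.mem_union, h])
    rcases hab.lt_or_gt with h | h
    · exact ⟨b, a, h, heq⟩
    · exact ⟨a, b, h, heq.symm⟩
  set j := Nat.find hQ with hj
  obtain ⟨i, hij, hgij⟩ := Nat.find_spec hQ
  have ginj : ∀ a b, a < b → b < j → g a ≠ g b := by
    intro a b h1 h2 h3
    exact Nat.find_min hQ h2 ⟨a, h1, h3⟩
  have Alt : ∀ k, (g k ∈ M ∧ g k ∉ M' ∧ g (k + 1) ∈ M' ∧ g (k + 1) ∉ M)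
      ∨ (g k ∈ M' ∧ g k ∉ M ∧ g (k + 1) ∈ M ∧ g (k + 1) ∉ M') := by
    intro k
    have h1 := hS k
    have h2 := hS (k + 1)
    have h3 := (hstep k).2.2
    tauto
  have hne1 : g i ≠ g (i + 1) := by
    rcases Alt i with ⟨h1, -, -, h4⟩ | ⟨h1, -, -, h4⟩ <;> exact fun h => h4 (h ▸ h1)
  have hn2 : 2 ≤ j - i := by
    rcases Nat.lt_or_ge (i + 1) j with h | h
    · omega
    · exfalso
      have hji : j = i + 1 := by omega
      exact hne1 (hji ▸ hgij)
  set n := j - i with hn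
  have hjin : j = i + n := by omega
  haveI : NeZero n := ⟨by omega⟩
  haveI : Fact (1 < n) := ⟨by omega⟩
  have winj : ∀ a b, a < b → b < j → w a ≠ w b := by
    intro a b hab hbj hweq
    have hcase2 : g (a + 1) = g b → False := by
      intro hgeq
      rcases Nat.lt_or_ge (a + 1) b with h | h
      · exact ginj (a + 1) b h hbj hgeq
      · have hb : b = a + 1 := by omega
        have h2 := (hstep a).2.1
        rw [← hb] at h2
        exact h2 (by rw [← hweq]; exact hwg a)
    rcases Alt a with ⟨haM, -, ha1M', -⟩ | ⟨haM', -, ha1M, -⟩ <;>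
      rcases Alt b with ⟨hbM, -, -, -⟩ | ⟨hbM', -, -, -⟩
    · exact ginj a b hab hbj (uM (w a) _ _ haM hbM (hwg a) (by rw [hweq]; exact hwg b))
    · exact hcase2 (uM' (w a) _ _ ha1M' hbM' (hstep a).1 (by rw [hweq]; exact hwg b))
    · exact hcase2 (uM (w a) _ _ ha1M hbM (hstep a).1 (by rw [hweq]; exact hwg b))
    · exact ginj a b hab hbj (uM' (w a) _ _ haM' hbM' (hwg a) (by rw [hweq]; exact hwg b))
  have hL : ∀ t : ZMod n, g (i + (t - 1).val + 1) = g (i + t.val) := by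
    intro t
    have h1 : ((t - 1) + 1 : ZMod n).val = ((t - 1).val + (1 : ZMod n).val) % n :=
      ZMod.val_add _ _
    rw [sub_add_cancel, ZMod.val_one] at h1
    rcases Nat.lt_or_ge ((t - 1).val + 1) n with h | h
    · rw [Nat.mod_eq_of_lt h] at h1
      have hx : i + (t - 1).val + 1 = i + t.val := by omega
      rw [hx]
    · have he : (t - 1).val + 1 = n := by have := ZMod.val_lt (t - 1); omega
      rw [he, Nat.mod_self] at h1
      have hx : i + (t - 1).val + 1 = j := by omega
      rw [hx, h1, Nat.add_zero]
      exact hgij.symm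
  apply hnc
  refine ⟨n, Finset.image (fun t : ZMod n => g (i + t.val)) Finset.univ,
    hn2, fun t => w (i + (t - 1).val), fun t => g (i + t.val), ?_, ?_, ?_, ?_, ?_, ?_⟩
  · intro t t' h
    have h1 : i + (t - 1).val = i + (t' - 1).val := by
      by_contra hne
      rcases Nat.lt_or_gt_of_ne hne with hlt | hlt
      · exact winj _ _ hlt (by have := ZMod.val_lt (t' - 1); omega) h
      · exact winj _ _ hlt (by have := ZMod.val_lt (t - 1); omega) h.symm
    have h2 : (t - 1 : ZMod n) = t' - 1 := ZMod.val_injective n (by omega)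
    exact sub_left_inj.mp h2
  · intro t t' h
    have h1 : i + t.val = i + t'.val := by
      by_contra hne
      rcases Nat.lt_or_gt_of_ne hne with hlt | hlt
      · exact absurd h (ginj _ _ hlt (by have := ZMod.val_lt t'; omega))
      · exact absurd h.symm (ginj _ _ hlt (by have := ZMod.val_lt t; omega))
    exact ZMod.val_injective n (by omega)
  · intro t
    exact hgE _
  · intro t
    constructor
    · have h := (hstep (i + (t - 1).val)).1
      rw [hL t] at h
      exact h
    · show w (i + ((t + 1) - 1).val) ∈ g (i + t.val)
      have hx : ((t + 1) - 1 : ZMod n) = t := add_sub_cancel_right t 1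
      rw [hx]
      exact hwg _
  · intro t
    exact Finset.mem_image_of_mem _ (Finset.mem_univ t)
  · intro f hf
    obtain ⟨t, -, ht⟩ := Finset.mem_image.mp hf
    exact ⟨t, ht⟩
end

section
/- Let T be an m-uniform hypertree with at least two edges that has a perfect matching M. Then T contains a pendent edge belonging to M; moreover T can be written as T'(u) ⊙ Comb_u(u) for some vertex u, i.e., T is obtained by attaching an m-comb at a cut vertex u to a smaller hypertree T' which itself has a perfect matching. -/
namespace FinHypergraph

variable {α : Type*}

/-- A pendent edge of an `m`-uniform hypergraph: an edge containing `m−1` vertices of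
degree one. -/
def IsPendent [DecidableEq α] (H : FinHypergraph α) (m : ℕ) (e : Finset α) : Prop :=
  e ∈ H.edges ∧
    (e.filter fun v => (H.edges.filter fun f => v ∈ f).card = 1).card = m - 1

/-- An `m`-comb with endpoint `u`: an edge `e₀ = {u, v₁, …, v_{m−1}}` together with
pairwise disjoint further edges `f v` for `v ∈ e₀ \ {u}`, where `f v` meets `e₀`
exactly in `v`. -/
def IsComb [DecidableEq α] (H : FinHypergraph α) (m : ℕ) (u : α) : Prop :=
  ∃ (e₀ : Finset α) (f : α → Finset α),
    u ∈ e₀ ∧ e₀.card = m ∧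
    H.edges = insert e₀ ((e₀.erase u).image f) ∧
    H.verts = e₀ ∪ (e₀.erase u).biUnion f ∧
    (∀ v ∈ e₀.erase u, (f v).card = m ∧ f v ∩ e₀ = {v}) ∧
    (∀ v ∈ e₀.erase u, ∀ w ∈ e₀.erase u, v ≠ w → Disjoint (f v) (f w)) ∧
    e₀ ∉ (e₀.erase u).image f ∧
    Set.InjOn f (e₀.erase u)

end FinHypergraph

namespace FinHypergraph

variable {α : Type*}

/-- One step of a walk avoiding the edge `e`. -/
def Step (T : FinHypergraph α) (e : Finset α) (a b : α) : Prop :=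
  ∃ h ∈ T.edges, h ≠ e ∧ a ∈ h ∧ b ∈ h

/-- Reachability avoiding the edge `e`. -/
def Reach (T : FinHypergraph α) (e : Finset α) : α → α → Prop :=
  Relation.ReflTransGen (T.Step e)

lemma step_symm {T : FinHypergraph α} {e : Finset α} : Symmetric (T.Step e) := by
  rintro a b ⟨h, hh, hne, ha, hb⟩; exact ⟨h, hh, hne, hb, ha⟩

lemma reach_symm {T : FinHypergraph α} {e : Finset α} {a b : α} (h : T.Reach e a b) :
    T.Reach e b a := by
  haveI : Std.Symm (T.Step e) := ⟨fun a b h => step_symm h⟩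
  exact Std.Symm.symm (r := Relation.ReflTransGen (T.Step e)) _ _ h

lemma exists_walk {T : FinHypergraph α} {e : Finset α} {a b : α} (h : T.Reach e a b) :
    ∃ (k : ℕ) (x : ℕ → α) (g : ℕ → Finset α), x 0 = a ∧ x k = b ∧
      ∀ i < k, g i ∈ T.edges ∧ g i ≠ e ∧ x i ∈ g i ∧ x (i + 1) ∈ g i := by
  induction h with
  | refl => exact ⟨0, fun _ => a, fun _ => e, rfl, rfl, by omega⟩
  | @tail b c hab hbc ih =>
    obtain ⟨k, x, g, hx0, hxk, hstep⟩ := ih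
    obtain ⟨h', hh1, hh2, hh3, hh4⟩ := hbc
    refine ⟨k + 1, fun t => if t ≤ k then x t else c,
      fun t => if t < k then g t else h', by simp [hx0], by simp, ?_⟩
    intro i hi
    rcases lt_or_ge i k with h | h
    · have h1 : i ≤ k := h.le
      have h2 : i + 1 ≤ k := h
      simp only [if_pos h, if_pos h1, if_pos h2]
      exact hstep i h
    · have hik : i = k := by omega
      subst hik
      simp only [lt_irrefl, if_neg, le_refl, if_pos]
      have : ¬ (i + 1 ≤ i) := by omega
      rw [if_neg this]
      exact ⟨hh1, hh2, hxk ▸ hh3, hh4⟩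

lemma walk_shortcut {T : FinHypergraph α} {e : Finset α} {k i j : ℕ} {x : ℕ → α}
    {g : ℕ → Finset α}
    (hw : ∀ t < k, g t ∈ T.edges ∧ g t ≠ e ∧ x t ∈ g t ∧ x (t + 1) ∈ g t)
    (hij : i < j) (hjk : j ≤ k)
    (hcase : x i = x j ∨ (j < k ∧ x i ∈ g j)) :
    ∃ (x' : ℕ → α) (g' : ℕ → Finset α), x' 0 = x 0 ∧ x' (k - (j - i)) = x k ∧
      ∀ t < k - (j - i), g' t ∈ T.edges ∧ g' t ≠ e ∧ x' t ∈ g' t ∧ x' (t + 1) ∈ g' t := by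
  refine ⟨fun t => if t ≤ i then x t else x (t + (j - i)),
    fun t => if t < i then g t else g (t + (j - i)), by simp, ?_, ?_⟩
  · rcases le_or_gt (k - (j - i)) i with h | h
    · have hjk' : j = k := by omega
      have hki : k - (j - i) = i := by omega
      rw [hki]
      show (if i ≤ i then x i else x (i + (j - i))) = x k
      rw [if_pos le_rfl]
      rcases hcase with hc | hc
      · rw [hc, hjk']
      · omega
    · show (if k - (j - i) ≤ i then x (k - (j - i)) else x (k - (j - i) + (j - i))) = x k
      rw [if_neg (by omega)]
      congr 1
      omega
  · intro t ht
    rcases lt_trichotomy t i with h1 | h1 | h1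
    · have h2 : t ≤ i := h1.le
      have h3 : t + 1 ≤ i := h1
      simp only [if_pos h1, if_pos h2, if_pos h3]
      exact hw t (by omega)
    · subst h1
      have hjlt : j < k := by omega
      show (if t < t then g t else g (t + (j - t))) ∈ T.edges ∧
        (if t < t then g t else g (t + (j - t))) ≠ e ∧
        (if t ≤ t then x t else x (t + (j - t))) ∈ (if t < t then g t else g (t + (j - t))) ∧
        (if t + 1 ≤ t then x (t + 1) else x (t + 1 + (j - t))) ∈
          (if t < t then g t else g (t + (j - t)))
      rw [if_neg (lt_irrefl t), if_pos le_rfl, if_neg (by omega : ¬ (t + 1 ≤ t))]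
      have hidx : t + (j - t) = j := by omega
      have hidx2 : t + 1 + (j - t) = j + 1 := by omega
      rw [hidx, hidx2]
      obtain ⟨w1, w2, w3, w4⟩ := hw j hjlt
      refine ⟨w1, w2, ?_, w4⟩
      rcases hcase with hc | hc
      · rw [hc]; exact w3
      · exact hc.2
    · have h2 : ¬ (t ≤ i) := by omega
      have h3 : ¬ (t + 1 ≤ i) := by omega
      have h4 : ¬ (t < i) := by omega
      show (if t < i then g t else g (t + (j - i))) ∈ T.edges ∧
        (if t < i then g t else g (t + (j - i))) ≠ e ∧
        (if t ≤ i then x t else x (t + (j - i))) ∈ (if t < i then g t else g (t + (j - i))) ∧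
        (if t + 1 ≤ i then x (t + 1) else x (t + 1 + (j - i))) ∈
          (if t < i then g t else g (t + (j - i)))
      rw [if_neg h2, if_neg h3, if_neg h4]
      have hidx : t + 1 + (j - i) = t + (j - i) + 1 := by omega
      rw [hidx]
      exact hw (t + (j - i)) (by omega)


lemma no_reach_of_acyclic {T : FinHypergraph α} (hnc : ¬ T.HasCycle) {e : Finset α}
    (he : e ∈ T.edges) {a b : α} (ha : a ∈ e) (hb : b ∈ e) (hab : a ≠ b)
    (hr : T.Reach e a b) : False := by
  classical
  have hPex : ∃ k, ∃ (x : ℕ → α) (g : ℕ → Finset α), x 0 = a ∧ x k = b ∧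
      ∀ i < k, g i ∈ T.edges ∧ g i ≠ e ∧ x i ∈ g i ∧ x (i + 1) ∈ g i := exists_walk hr
  set k := Nat.find hPex with hk
  obtain ⟨x, g, hx0, hxk, hw⟩ := Nat.find_spec hPex
  have hmin : ∀ k' < k, ¬ ∃ (x : ℕ → α) (g : ℕ → Finset α), x 0 = a ∧ x k' = b ∧
      ∀ i < k', g i ∈ T.edges ∧ g i ≠ e ∧ x i ∈ g i ∧ x (i + 1) ∈ g i :=
    fun k' h => Nat.find_min hPex h
  have hk1 : 1 ≤ k := by
    by_contra h
    have hk0 : k = 0 := by omega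
    exact hab (hx0 ▸ hk0 ▸ hxk ▸ rfl)
  have short : ∀ i j, i < j → j ≤ k → (x i = x j ∨ (j < k ∧ x i ∈ g j)) → False := by
    intro i j hij hjk hc
    obtain ⟨x', g', h1, h2, h3⟩ := walk_shortcut hw hij hjk hc
    exact hmin (k - (j - i)) (by omega) ⟨x', g', by rw [h1, hx0], by rw [h2, hxk], h3⟩
  have hxinj : ∀ i j, i ≤ k → j ≤ k → x i = x j → i = j := by
    intro i j hi hj hxy
    rcases lt_trichotomy i j with h | h | h
    · exact absurd (short i j h hj (Or.inl hxy)) not_false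
    · exact h
    · exact absurd (short j i h hi (Or.inl hxy.symm)) not_false
  have hginj : ∀ i j, i < k → j < k → g i = g j → i = j := by
    intro i j hi hj hgij
    rcases lt_trichotomy i j with h | h | h
    · exact absurd (short i j h hj.le (Or.inr ⟨hj, hgij ▸ (hw i hi).2.2.1⟩)) not_false
    · exact h
    · exact absurd (short j i h hi.le (Or.inr ⟨hi, hgij ▸ (hw j hj).2.2.1⟩)) not_false
  set n := k + 1 with hn
  haveI : NeZero n := ⟨by omega⟩
  haveI hfact : Fact (1 < n) := ⟨by omega⟩
  have hvalone : (1 : ZMod n).val = 1 := ZMod.val_one n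
  set v : ZMod n → α := fun i => x i.val with hv
  set ee : ZMod n → Finset α := fun i => if i.val < k then g i.val else e with hee
  have heemem : ∀ i : ZMod n, ee i ∈ T.edges := by
    intro i
    show (if i.val < k then g i.val else e) ∈ T.edges
    by_cases h : i.val < k
    · rw [if_pos h]; exact (hw i.val h).1
    · rw [if_neg h]; exact he
  have hvlt : ∀ i : ZMod n, i.val ≤ k := fun i => by
    have := ZMod.val_lt i; omega
  apply hnc
  refine ⟨n, Finset.image ee Finset.univ, by omega, v, ee, ?_, ?_, heemem, ?_, ?_, ?_⟩
  · intro i j hij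
    apply ZMod.val_injective
    exact hxinj i.val j.val (hvlt i) (hvlt j) hij
  · intro i j hij
    have hij' : (if i.val < k then g i.val else e) = (if j.val < k then g j.val else e) := hij
    clear hij
    rename' hij' => hij
    by_cases hi : i.val < k <;> by_cases hj : j.val < k
    · rw [if_pos hi, if_pos hj] at hij
      exact ZMod.val_injective n (hginj i.val j.val hi hj hij)
    · rw [if_pos hi, if_neg hj] at hij
      exact absurd hij (hw i.val hi).2.1
    · rw [if_neg hi, if_pos hj] at hij
      exact absurd hij.symm (hw j.val hj).2.1
    · apply ZMod.val_injective
      have := hvlt i; have := hvlt j; omega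
  · intro i
    have hadd : (i + 1).val = (i.val + 1) % n := by
      rw [ZMod.val_add, hvalone]
    by_cases h : i.val < k
    · have h1 : (i.val + 1) % n = i.val + 1 := Nat.mod_eq_of_lt (by omega)
      rw [hv, hee]
      show x i.val ∈ (if i.val < k then g i.val else e) ∧
        x (i + 1).val ∈ (if i.val < k then g i.val else e)
      rw [if_pos h, hadd, h1]
      exact ⟨(hw i.val h).2.2.1, (hw i.val h).2.2.2⟩
    · have hik : i.val = k := by have := hvlt i; omega
      have h1 : (i.val + 1) % n = 0 := by rw [hik]; simp [hn]
      rw [hv, hee]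
      show x i.val ∈ (if i.val < k then g i.val else e) ∧
        x (i + 1).val ∈ (if i.val < k then g i.val else e)
      rw [if_neg h, hadd, h1, hik, hxk, hx0]
      exact ⟨hb, ha⟩
  · intro i
    exact Finset.mem_image_of_mem ee (Finset.mem_univ i)
  · intro f hf
    obtain ⟨i, _, hi⟩ := Finset.mem_image.mp hf
    exact ⟨i, hi⟩

lemma reach_redirect {T : FinHypergraph α} (hnc : ¬ T.HasCycle) {e g : Finset α}
    (he : e ∈ T.edges) (hg : g ∈ T.edges) (hge : g ≠ e)
    {u v : α} (hu : u ∈ e) (hv : v ∈ e) (huv : u ≠ v) (hvg : v ∈ g)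
    {x : α} (hr : T.Reach e u x) : T.Reach g u x := by
  induction hr with
  | refl => exact Relation.ReflTransGen.refl
  | @tail y z hab hbc ih =>
    obtain ⟨h, hh, hhe, hy, hz⟩ := hbc
    by_cases hhg : h = g
    · exact absurd (hab.tail ⟨h, hh, hhe, hy, hhg ▸ hvg⟩)
        (fun hr' => no_reach_of_acyclic hnc he hu hv huv hr')
    · exact ih.tail ⟨h, hh, hhg, hy, hz⟩

lemma reach_closed {T : FinHypergraph α} {e : Finset α}
    (hcl : ∀ h ∈ T.edges, ∀ z ∈ h, z ∈ e → h ⊆ e) {a b : α}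
    (hr : Relation.ReflTransGen (fun a b => ∃ h ∈ T.edges, a ∈ h ∧ b ∈ h) a b)
    (ha : a ∈ e) : b ∈ e := by
  induction hr with
  | refl => exact ha
  | tail hab hbc ih =>
    obtain ⟨h, hh, hy, hz⟩ := hbc
    exact hcl h hh _ hy ih hz


lemma pendent_mem_matching [DecidableEq α] {T : FinHypergraph α} {m : ℕ} (hm : 2 ≤ m)
    {M : Finset (Finset α)} (hM : T.IsPerfectMatching M) {e : Finset α}
    (hp : T.IsPendent m e) : e ∈ M := by
  obtain ⟨heT, hcard⟩ := hp
  have hne : (e.filter fun v => (T.edges.filter fun f => v ∈ f).card = 1).Nonempty := by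
    rw [Finset.nonempty_iff_ne_empty]
    intro h
    rw [h, Finset.card_empty] at hcard
    omega
  obtain ⟨w, hw⟩ := hne
  obtain ⟨hwe, hwdeg⟩ := Finset.mem_filter.mp hw
  obtain ⟨g, hgM, hwg⟩ := hM.2.2 w (T.edge_sub e heT hwe)
  have hgfil : g ∈ T.edges.filter fun f => w ∈ f := Finset.mem_filter.mpr ⟨hM.1 hgM, hwg⟩
  have hefil : e ∈ T.edges.filter fun f => w ∈ f := Finset.mem_filter.mpr ⟨heT, hwe⟩
  have := Finset.card_le_one.mp (le_of_eq hwdeg) e hefil g hgfil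
  exact this ▸ hgM

end FinHypergraph

/-- Let `T` be an `m`-uniform hypertree with at least two edges having a perfect matching
`M`. Then some pendent edge of `T` belongs to `M`, and `T = T'(u) ⊙ Comb_u(u)`: `T` is
obtained by attaching an `m`-comb at a cut vertex `u` to a smaller hypertree `T'` which
itself has a perfect matching. -/
theorem hypertree_perfectMatching_decomposition {α : Type*} [DecidableEq α] (m : ℕ)
    (hm : 2 ≤ m) (T : FinHypergraph α) (hT : T.IsHypertree m) (h2 : 2 ≤ T.edges.card)
    (M : Finset (Finset α)) (hM : T.IsPerfectMatching M) :
    (∃ e ∈ M, T.IsPendent m e) ∧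
    ∃ (u : α) (T' C : FinHypergraph α), C.IsComb m u ∧ T'.IsHypertree m ∧
      (∃ M', T'.IsPerfectMatching M') ∧
      T.edges = T'.edges ∪ C.edges ∧ Disjoint T'.edges C.edges ∧
      T.verts = T'.verts ∪ C.verts ∧ T'.verts ∩ C.verts = {u} := by
  classical
  obtain ⟨hU, hconn, hnc⟩ := hT
  obtain ⟨hMsub, hMdisj, hMcov⟩ := hM
  have hM' : T.IsPerfectMatching M := ⟨hMsub, hMdisj, hMcov⟩
  obtain ⟨E1, hE1, E2, hE2, hE12⟩ := Finset.one_lt_card.mp (by omega : 1 < T.edges.card)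
  have hedge_ne : ∀ e ∈ T.edges, e.Nonempty := fun e he =>
    Finset.card_pos.mp (by rw [hU e he]; omega)
  -- a non-pendent edge exists
  have hnonpend : ∃ e ∈ T.edges, ¬ T.IsPendent m e := by
    by_contra hall
    push_neg at hall
    have hMeq : ∀ e ∈ T.edges, e ∈ M := fun e heT =>
      FinHypergraph.pendent_mem_matching hm hM' (hall e heT)
    have hcl : ∀ h ∈ T.edges, ∀ z ∈ h, z ∈ E1 → h ⊆ E1 := by
      intro h hh z hz hz1
      rcases eq_or_ne h E1 with rfl | hne
      · exact subset_rfl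
      · exact absurd hz1
          (Finset.disjoint_left.mp (hMdisj h (hMeq h hh) E1 (hMeq E1 hE1) hne) hz)
    obtain ⟨y, hy⟩ := hedge_ne E2 hE2
    obtain ⟨z, hz⟩ := hedge_ne E1 hE1
    have hy1 : y ∈ E1 := FinHypergraph.reach_closed hcl
      (hconn z (T.edge_sub E1 hE1 hz) y (T.edge_sub E2 hE2 hy)) hz
    exact Finset.disjoint_left.mp (hMdisj E1 (hMeq E1 hE1) E2 (hMeq E2 hE2) hE12) hy1 hy
  -- maximize branch size over pairs (e, u) with e non-pendent, u ∈ e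
  obtain ⟨p, hmemS, hmax⟩ :=
    Finset.exists_max_image
      ((T.edges.filter fun e => ¬ T.IsPendent m e).biUnion fun e => e.image fun z => (e, z))
      (fun p => (T.verts.filter fun y => T.Reach p.1 p.2 y).card)
      (by
        obtain ⟨e, he, hpe⟩ := hnonpend
        obtain ⟨z, hz⟩ := hedge_ne e he
        exact ⟨(e, z), Finset.mem_biUnion.mpr ⟨e, Finset.mem_filter.mpr ⟨he, hpe⟩,
          Finset.mem_image_of_mem _ hz⟩⟩)
  obtain ⟨e₀, hfil, hmem'⟩ := Finset.mem_biUnion.mp hmemS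
  obtain ⟨u, hu, hpu⟩ := Finset.mem_image.mp hmem'
  subst hpu
  obtain ⟨he₀, hnp₀⟩ := Finset.mem_filter.mp hfil
  have hm₀ : e₀.card = m := hU e₀ he₀
  -- every other edge through a vertex ≠ u of e₀ is pendent
  have hpend : ∀ v ∈ e₀, v ≠ u → ∀ g ∈ T.edges, g ≠ e₀ → v ∈ g → T.IsPendent m g := by
    intro v hv hvu g hg hge hvg
    by_contra hgp
    have hvert : v ∈ T.verts := T.edge_sub e₀ he₀ hv
    have hins : insert v (T.verts.filter fun y => T.Reach e₀ u y) ⊆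
        T.verts.filter fun y => T.Reach g v y := by
      intro y hy
      rcases Finset.mem_insert.mp hy with rfl | hy
      · exact Finset.mem_filter.mpr ⟨hvert, Relation.ReflTransGen.refl⟩
      · obtain ⟨hyv, hreach⟩ := Finset.mem_filter.mp hy
        exact Finset.mem_filter.mpr ⟨hyv,
          Relation.ReflTransGen.trans
            (Relation.ReflTransGen.single ⟨e₀, he₀, Ne.symm hge, hv, hu⟩)
            (FinHypergraph.reach_redirect hnc he₀ hg hge hu hv (Ne.symm hvu) hvg hreach)⟩
    have hvnot : v ∉ T.verts.filter fun y => T.Reach e₀ u y := fun hvin =>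
      FinHypergraph.no_reach_of_acyclic hnc he₀ hu hv (Ne.symm hvu) (Finset.mem_filter.mp hvin).2
    have hle : ((T.verts.filter fun y => T.Reach g v y)).card ≤
        ((T.verts.filter fun y => T.Reach e₀ u y)).card :=
      hmax (g, v) (Finset.mem_biUnion.mpr ⟨g, Finset.mem_filter.mpr ⟨hg, hgp⟩,
        Finset.mem_image_of_mem _ hvg⟩)
    have hcard := Finset.card_le_card hins
    rw [Finset.card_insert_of_notMem hvnot] at hcard
    omega
  -- e₀ has a vertex ≠ u lying on a second edge
  have hx2 : ∃ w ∈ e₀, w ≠ u ∧ ∃ g ∈ T.edges, g ≠ e₀ ∧ w ∈ g := by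
    by_contra hno
    push_neg at hno
    by_cases hucase : ∃ g ∈ T.edges, g ≠ e₀ ∧ u ∈ g
    · apply hnp₀
      refine ⟨he₀, ?_⟩
      have hfeq : (e₀.filter fun v => (T.edges.filter fun f => v ∈ f).card = 1)
          = e₀.erase u := by
        apply Finset.ext
        intro w
        simp only [Finset.mem_filter, Finset.mem_erase]
        constructor
        · rintro ⟨hwe, hdeg⟩
          refine ⟨?_, hwe⟩
          rintro rfl
          obtain ⟨g, hg, hge, hug⟩ := hucase
          have h2 : 1 < (T.edges.filter fun f => w ∈ f).card :=
            Finset.one_lt_card.mpr ⟨e₀, Finset.mem_filter.mpr ⟨he₀, hwe⟩,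
              g, Finset.mem_filter.mpr ⟨hg, hug⟩, fun h => hge h.symm⟩
          omega
        · rintro ⟨hwu, hwe⟩
          refine ⟨hwe, ?_⟩
          have hsub : (T.edges.filter fun f => w ∈ f) = {e₀} := by
            apply Finset.eq_singleton_iff_unique_mem.mpr
            refine ⟨Finset.mem_filter.mpr ⟨he₀, hwe⟩, ?_⟩
            intro h hh
            obtain ⟨hhT, hwh⟩ := Finset.mem_filter.mp hh
            by_contra hne
            exact hno w hwe hwu h hhT hne hwh
          rw [hsub, Finset.card_singleton]
      rw [hfeq, Finset.card_erase_of_mem hu, hm₀]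
    · push_neg at hucase
      have hcl : ∀ h ∈ T.edges, ∀ z ∈ h, z ∈ e₀ → h ⊆ e₀ := by
        intro h hh z hz hz0
        rcases eq_or_ne h e₀ with rfl | hne
        · exact subset_rfl
        · rcases eq_or_ne z u with rfl | hzu
          · exact absurd hz (hucase h hh hne)
          · exact absurd hz (hno z hz0 hzu h hh hne)
      obtain ⟨E', hE', hEne⟩ : ∃ E' ∈ T.edges, E' ≠ e₀ := by
        rcases eq_or_ne E1 e₀ with h | h
        · exact ⟨E2, hE2, fun hc => hE12 (h.trans hc.symm)⟩
        · exact ⟨E1, hE1, h⟩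
      have hEsub : ¬ (E' ⊆ e₀) := by
        intro hsub
        exact hEne (Finset.eq_of_subset_of_card_le hsub (by rw [hU E' hE', hm₀]))
      obtain ⟨y, hyE, hyne⟩ := Finset.not_subset.mp hEsub
      exact hyne (FinHypergraph.reach_closed hcl
        (hconn u (T.edge_sub e₀ he₀ hu) y (T.edge_sub E' hE' hyE)) hu)
  have he₀M : e₀ ∉ M := by
    obtain ⟨w, hw, hwu, g, hg, hge, hwg⟩ := hx2
    intro heM
    have hgM := FinHypergraph.pendent_mem_matching hm hM' (hpend w hw hwu g hg hge hwg)
    exact Finset.disjoint_left.mp (hMdisj e₀ heM g hgM (Ne.symm hge)) hw hwg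
  -- the pendent matching edge at each v ∈ e₀ \ {u}
  have hfex : ∀ v, ∃ g, v ∈ e₀.erase u →
      g ∈ M ∧ v ∈ g ∧ g ≠ e₀ ∧ T.IsPendent m g ∧
      ∀ h ∈ T.edges, v ∈ h → h ≠ e₀ → h = g := by
    intro v
    by_cases hv : v ∈ e₀.erase u
    · obtain ⟨hvu, hve⟩ := Finset.mem_erase.mp hv
      obtain ⟨g, hgM, hvg⟩ := hMcov v (T.edge_sub e₀ he₀ hve)
      have hge : g ≠ e₀ := fun h => he₀M (h ▸ hgM)
      refine ⟨g, fun _ => ⟨hgM, hvg, hge, hpend v hve hvu g (hMsub hgM) hge hvg, ?_⟩⟩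
      intro h hh hvh hhe
      have hhM := FinHypergraph.pendent_mem_matching hm hM' (hpend v hve hvu h hh hhe hvh)
      by_contra hne
      exact Finset.disjoint_left.mp (hMdisj h hhM g hgM hne) hvh hvg
    · exact ⟨∅, fun h => absurd h hv⟩
  choose f hf using hfex
  have hfM : ∀ v ∈ e₀.erase u, f v ∈ M := fun v hv => (hf v hv).1
  have hvf : ∀ v ∈ e₀.erase u, v ∈ f v := fun v hv => (hf v hv).2.1
  have hfne : ∀ v ∈ e₀.erase u, f v ≠ e₀ := fun v hv => (hf v hv).2.2.1
  have hfp : ∀ v ∈ e₀.erase u, T.IsPendent m (f v) := fun v hv => (hf v hv).2.2.2.1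
  have hfuniq : ∀ v ∈ e₀.erase u, ∀ h ∈ T.edges, v ∈ h → h ≠ e₀ → h = f v :=
    fun v hv => (hf v hv).2.2.2.2
  have hfT : ∀ v ∈ e₀.erase u, f v ∈ T.edges := fun v hv => hMsub (hfM v hv)
  have hfcard : ∀ v ∈ e₀.erase u, (f v).card = m := fun v hv => hU _ (hfT v hv)
  have hfcap : ∀ v ∈ e₀.erase u, f v ∩ e₀ = {v} := by
    intro v hv
    obtain ⟨hvu, hve⟩ := Finset.mem_erase.mp hv
    apply Finset.ext
    intro y
    simp only [Finset.mem_inter, Finset.mem_singleton]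
    constructor
    · rintro ⟨hyf, hye⟩
      by_contra hyv
      exact FinHypergraph.no_reach_of_acyclic hnc he₀ hve hye (fun h => hyv h.symm)
        (Relation.ReflTransGen.single ⟨f v, hfT v hv, hfne v hv, hvf v hv, hyf⟩)
    · rintro rfl
      exact ⟨hvf _ hv, hve⟩
  have hunotf : ∀ v ∈ e₀.erase u, u ∉ f v := by
    intro v hv huf
    have hmem : u ∈ f v ∩ e₀ := Finset.mem_inter.mpr ⟨huf, hu⟩
    rw [hfcap v hv, Finset.mem_singleton] at hmem
    exact (Finset.mem_erase.mp hv).1 hmem.symm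
  have hfinj : ∀ v ∈ e₀.erase u, ∀ w ∈ e₀.erase u, f v = f w → v = w := by
    intro v hv w hw hfvw
    have hmem : v ∈ f w ∩ e₀ :=
      Finset.mem_inter.mpr ⟨hfvw ▸ hvf v hv, (Finset.mem_erase.mp hv).2⟩
    rw [hfcap w hw, Finset.mem_singleton] at hmem
    exact hmem
  have hfdisj : ∀ v ∈ e₀.erase u, ∀ w ∈ e₀.erase u, v ≠ w → Disjoint (f v) (f w) :=
    fun v hv w hw hvw =>
      hMdisj (f v) (hfM v hv) (f w) (hfM w hw) (fun h => hvw (hfinj v hv w hw h))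
  -- interior vertices of the pendent edges have degree one
  have hfdeg1 : ∀ v ∈ e₀.erase u, ∀ y ∈ f v, y ≠ v → ∀ h ∈ T.edges, y ∈ h → h = f v := by
    intro v hv y hyf hyv h hh hyh
    obtain ⟨hvu, hve⟩ := Finset.mem_erase.mp hv
    have hvdeg : ¬ ((T.edges.filter fun f' => v ∈ f').card = 1) := by
      have h2 : 1 < (T.edges.filter fun f' => v ∈ f').card :=
        Finset.one_lt_card.mpr ⟨e₀, Finset.mem_filter.mpr ⟨he₀, hve⟩,
          f v, Finset.mem_filter.mpr ⟨hfT v hv, hvf v hv⟩, fun hc => (hfne v hv) hc.symm⟩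
      omega
    have hD : ((f v).filter fun y' => (T.edges.filter fun f' => y' ∈ f').card = 1)
        = (f v).erase v := by
      apply Finset.eq_of_subset_of_card_le
      · intro y' hy'
        obtain ⟨h1, h2⟩ := Finset.mem_filter.mp hy'
        refine Finset.mem_erase.mpr ⟨?_, h1⟩
        rintro rfl
        exact hvdeg h2
      · rw [Finset.card_erase_of_mem (hvf v hv), hfcard v hv, (hfp v hv).2]
    have hyD : y ∈ (f v).filter fun y' => (T.edges.filter fun f' => y' ∈ f').card = 1 := by
      rw [hD]
      exact Finset.mem_erase.mpr ⟨hyv, hyf⟩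
    exact Finset.card_le_one.mp (le_of_eq (Finset.mem_filter.mp hyD).2)
      h (Finset.mem_filter.mpr ⟨hh, hyh⟩) (f v) (Finset.mem_filter.mpr ⟨hfT v hv, hyf⟩)
  -- the comb and the rest
  have hCsub : ∀ h ∈ insert e₀ ((e₀.erase u).image f), h ⊆ e₀ ∪ (e₀.erase u).biUnion f := by
    intro h hh
    rcases Finset.mem_insert.mp hh with rfl | hh
    · exact Finset.subset_union_left
    · obtain ⟨v, hv, rfl⟩ := Finset.mem_image.mp hh
      exact (Finset.subset_biUnion_of_mem f hv).trans Finset.subset_union_right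
  have hCeT : insert e₀ ((e₀.erase u).image f) ⊆ T.edges := by
    intro h hh
    rcases Finset.mem_insert.mp hh with rfl | hh
    · exact he₀
    · obtain ⟨v, hv, rfl⟩ := Finset.mem_image.mp hh
      exact hfT v hv
  have hCvT : e₀ ∪ (e₀.erase u).biUnion f ⊆ T.verts := by
    intro y hy
    rcases Finset.mem_union.mp hy with hy | hy
    · exact T.edge_sub e₀ he₀ hy
    · obtain ⟨v, hv, hyf⟩ := Finset.mem_biUnion.mp hy
      exact T.edge_sub _ (hfT v hv) hyf
  -- interior lemma : edges outside the comb meet it only in u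
  have hint : ∀ h ∈ T.edges, h ∉ insert e₀ ((e₀.erase u).image f) →
      ∀ y ∈ h, y ∈ e₀ ∪ (e₀.erase u).biUnion f → y = u := by
    intro h hh hhC y hyh hyC
    by_contra hyu
    have hhe : h ≠ e₀ := fun hc => hhC (hc ▸ Finset.mem_insert_self _ _)
    by_cases hye : y ∈ e₀
    · have hyer : y ∈ e₀.erase u := Finset.mem_erase.mpr ⟨hyu, hye⟩
      have heq := hfuniq y hyer h hh hyh hhe
      exact hhC (heq ▸ Finset.mem_insert_of_mem (Finset.mem_image_of_mem f hyer))
    · rcases Finset.mem_union.mp hyC with hy0 | hyb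
      · exact hye hy0
      · obtain ⟨v, hv, hyf⟩ := Finset.mem_biUnion.mp hyb
        have hyv : y ≠ v := fun hc => hye (hc ▸ (Finset.mem_erase.mp hv).2)
        have heq := hfdeg1 v hv y hyf hyv h hh hyh
        exact hhC (heq ▸ Finset.mem_insert_of_mem (Finset.mem_image_of_mem f hv))
  have hT'sub : ∀ h ∈ T.edges \ insert e₀ ((e₀.erase u).image f),
      h ⊆ T.verts \ (e₀ ∪ (e₀.erase u).biUnion f).erase u := by
    intro h hh y hy
    obtain ⟨hhT, hhC⟩ := Finset.mem_sdiff.mp hh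
    refine Finset.mem_sdiff.mpr ⟨T.edge_sub h hhT hy, ?_⟩
    intro hyC
    obtain ⟨hyu, hyCv⟩ := Finset.mem_erase.mp hyC
    exact hyu (hint h hhT hhC y hy hyCv)
  have herase_ne : (e₀.erase u).Nonempty := by
    rw [← Finset.card_pos, Finset.card_erase_of_mem hu, hm₀]
    omega
  obtain ⟨v₀, hv₀⟩ := herase_ne
  refine ⟨⟨f v₀, hfM v₀ hv₀, hfp v₀ hv₀⟩, u,
    ⟨T.verts \ (e₀ ∪ (e₀.erase u).biUnion f).erase u,
      T.edges \ insert e₀ ((e₀.erase u).image f), hT'sub⟩,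
    ⟨e₀ ∪ (e₀.erase u).biUnion f, insert e₀ ((e₀.erase u).image f), hCsub⟩,
    ?_, ⟨?_, ?_, ?_⟩, ?_, ?_, ?_, ?_, ?_⟩
  · -- IsComb
    refine ⟨e₀, f, hu, hm₀, rfl, rfl,
      fun v hv => ⟨hfcard v hv, hfcap v hv⟩, hfdisj, ?_, ?_⟩
    · intro hmem
      obtain ⟨v, hv, hveq⟩ := Finset.mem_image.mp hmem
      have hcap := hfcap v hv
      rw [hveq, Finset.inter_self] at hcap
      have := hm₀
      rw [hcap, Finset.card_singleton] at this
      omega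
    · intro a ha b hb hab
      exact hfinj a (Finset.mem_coe.mp ha) b (Finset.mem_coe.mp hb) hab
  · -- uniform
    exact fun e he => hU e (Finset.mem_sdiff.mp he).1
  · -- connected
    intro a ha b hb
    obtain ⟨haT, haC⟩ := Finset.mem_sdiff.mp ha
    obtain ⟨hbT, hbC⟩ := Finset.mem_sdiff.mp hb
    have key : ∀ z, Relation.ReflTransGen (fun a b => ∃ e ∈ T.edges, a ∈ e ∧ b ∈ e) a z →
        Relation.ReflTransGen
          (fun a' b' => ∃ e ∈ T.edges \ insert e₀ ((e₀.erase u).image f), a' ∈ e ∧ b' ∈ e) a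
          (if z ∈ (e₀ ∪ (e₀.erase u).biUnion f).erase u then u else z) := by
      intro z hz
      induction hz with
      | refl =>
        rw [if_neg haC]
      | @tail y z' hab hbc ih =>
        obtain ⟨h, hh, hy, hz'⟩ := hbc
        by_cases hhC : h ∈ insert e₀ ((e₀.erase u).image f)
        · have hmem : ∀ t ∈ h,
              (if t ∈ (e₀ ∪ (e₀.erase u).biUnion f).erase u then u else t) = u := by
            intro t ht
            by_cases htu : t = u
            · rw [if_neg (fun hc => (Finset.mem_erase.mp hc).1 htu), htu]
            · rw [if_pos (Finset.mem_erase.mpr ⟨htu, hCsub h hhC ht⟩)]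
          rw [hmem z' hz']
          rw [hmem y hy] at ih
          exact ih
        · have hyn : y ∉ (e₀ ∪ (e₀.erase u).biUnion f).erase u := fun hc =>
            (Finset.mem_erase.mp hc).1 (hint h hh hhC y hy (Finset.mem_erase.mp hc).2)
          have hzn : z' ∉ (e₀ ∪ (e₀.erase u).biUnion f).erase u := fun hc =>
            (Finset.mem_erase.mp hc).1 (hint h hh hhC z' hz' (Finset.mem_erase.mp hc).2)
          rw [if_neg hzn]
          rw [if_neg hyn] at ih
          exact ih.tail ⟨h, Finset.mem_sdiff.mpr ⟨hh, hhC⟩, hy, hz'⟩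
    have hkey := key b (hconn a haT b hbT)
    rwa [if_neg hbC] at hkey
  · -- acyclic
    rintro ⟨n, Cs, hn2, v, ev, hvinj, heinj, hemem, hinc, hC1, hC2⟩
    exact hnc ⟨n, Cs, hn2, v, ev, hvinj, heinj,
      fun i => (Finset.mem_sdiff.mp (hemem i)).1, hinc, hC1, hC2⟩
  · -- perfect matching of T'
    refine ⟨M \ insert e₀ ((e₀.erase u).image f), ?_, ?_, ?_⟩
    · intro g hg
      obtain ⟨hgM, hgC⟩ := Finset.mem_sdiff.mp hg
      exact Finset.mem_sdiff.mpr ⟨hMsub hgM, hgC⟩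
    · intro a ha b hb hab
      exact hMdisj a (Finset.mem_sdiff.mp ha).1 b (Finset.mem_sdiff.mp hb).1 hab
    · intro y hy
      obtain ⟨hyT, hyC⟩ := Finset.mem_sdiff.mp hy
      obtain ⟨g, hgM, hyg⟩ := hMcov y hyT
      refine ⟨g, Finset.mem_sdiff.mpr ⟨hgM, ?_⟩, hyg⟩
      intro hgC
      rcases Finset.mem_insert.mp hgC with rfl | hgim
      · exact he₀M hgM
      · obtain ⟨v, hv, rfl⟩ := Finset.mem_image.mp hgim
        apply hyC
        refine Finset.mem_erase.mpr ⟨?_,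
          Finset.mem_union_right _ (Finset.mem_biUnion.mpr ⟨v, hv, hyg⟩)⟩
        rintro rfl
        exact hunotf v hv hyg
  · -- edge decomposition
    exact (Finset.sdiff_union_of_subset hCeT).symm
  · -- disjointness
    exact Finset.sdiff_disjoint
  · -- vertex decomposition
    apply Finset.Subset.antisymm
    · intro y hy
      by_cases hyC : y ∈ e₀ ∪ (e₀.erase u).biUnion f
      · exact Finset.mem_union_right _ hyC
      · refine Finset.mem_union_left _ (Finset.mem_sdiff.mpr ⟨hy, ?_⟩)
        intro hc
        exact hyC (Finset.mem_of_mem_erase hc)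
    · intro y hy
      rcases Finset.mem_union.mp hy with hy | hy
      · exact (Finset.mem_sdiff.mp hy).1
      · exact hCvT hy
  · -- intersection is {u}
    apply Finset.ext
    intro y
    simp only [Finset.mem_inter, Finset.mem_sdiff, Finset.mem_singleton, Finset.mem_erase]
    constructor
    · rintro ⟨⟨hyT, hyn⟩, hyC⟩
      by_contra hyu
      exact hyn ⟨hyu, hyC⟩
    · rintro rfl
      exact ⟨⟨T.edge_sub e₀ he₀ hu, fun hc => hc.1 rfl⟩, Finset.mem_union_left _ hu⟩
end

section
/- Let H be an m-uniform Veblen multi-hypergraph admitting an Euler rooting, and let e be an edge of the underlying hypergraph containing a vertex of degree one (a cored vertex). Then the multiplicity of e in H is k·m for some positive integer k, and in any Euler rooting every cored vertex of e occurs as a root of e exactly k times. -/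
/-!
Fix a cored vertex `v` of `e`: every edge copy containing `v` is a copy of `e`. If `r` of
these copies are rooted at `v`, then `v` has out-degree `(m - 1) r` in the rooting digraph and
in-degree `count e - r`, so the Euler balance at `v` gives `count e = m r`. Hence `r` is the
same for every cored vertex of `e`.
-/

/-- A multi-hypergraph is given by a multiset `E` of edges (finsets of vertices).
Its vertex set is the union of its edges. -/
def mhVerts {α : Type*} [DecidableEq α] (E : Multiset (Finset α)) : Finset α :=
  E.toFinset.sup id

/-- The degree of a vertex in a multi-hypergraph: the number of edge copies containing
it. -/
def mhDegree {α : Type*} [DecidableEq α] (E : Multiset (Finset α)) (v : α) : ℕ :=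
  (E.filter fun e => v ∈ e).card

/-- The arcs of the directed multigraph `R(F)` associated with a rooting `F`: each
rooted edge copy `(v, e)` contributes an arc from the root `v` to each of the other
vertices of `e`. -/
def rootingArcs {α : Type*} [DecidableEq α] (F : Multiset (α × Finset α)) :
    Multiset (α × α) :=
  F.bind fun p => (p.2.erase p.1).val.map fun u => (p.1, u)

/-- `F` is an Euler rooting of the multi-hypergraph `E`: every edge copy of `E` is
assigned a root vertex belonging to it, and the associated directed multigraph `R(F)` is
Eulerian (in-degree equals out-degree at every vertex, and it is connected). -/
def IsEulerRooting {α : Type*} [DecidableEq α] (E : Multiset (Finset α))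
    (F : Multiset (α × Finset α)) : Prop :=
  F.map Prod.snd = E ∧ (∀ p ∈ F, p.1 ∈ p.2) ∧
  (∀ v : α, ((rootingArcs F).filter fun a => a.1 = v).card =
    ((rootingArcs F).filter fun a => a.2 = v).card) ∧
  ∀ u ∈ mhVerts E, ∀ v ∈ mhVerts E,
    Relation.ReflTransGen (fun a b => (a, b) ∈ rootingArcs F ∨ (b, a) ∈ rootingArcs F) u v

section

variable {α : Type*} [DecidableEq α]

open Multiset

@[simp]
theorem rootingArcs_zero : rootingArcs (0 : Multiset (α × Finset α)) = 0 := zero_bind _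

theorem rootingArcs_cons (p : α × Finset α) (F : Multiset (α × Finset α)) :
    rootingArcs (p ::ₘ F) = ((p.2.erase p.1).val.map fun u => (p.1, u)) + rootingArcs F :=
  cons_bind _ _ _

theorem card_filter_fst_rootingArcs (F : Multiset (α × Finset α)) (v : α) :
    ((rootingArcs F).filter fun a => a.1 = v).card =
      ((F.filter fun p => p.1 = v).map fun p => (p.2.erase p.1).card).sum := by
  induction F using Multiset.induction_on with
  | empty => simp
  | cons p F ih =>
    rw [rootingArcs_cons, filter_add, card_add, ih, filter_map, card_map]
    by_cases h : p.1 = v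
    · rw [filter_cons_of_pos (p := fun q : α × Finset α => q.1 = v) F h, map_cons, sum_cons]
      simp only [Function.comp_def, h, filter_true]
      rfl
    · simp [h]

theorem card_filter_snd_rootingArcs (F : Multiset (α × Finset α)) (v : α) :
    ((rootingArcs F).filter fun a => a.2 = v).card =
      (F.filter fun p => v ∈ p.2.erase p.1).card := by
  induction F using Multiset.induction_on with
  | empty => simp
  | cons p F ih =>
    rw [rootingArcs_cons, filter_add, card_add, ih, filter_map, card_map, filter_cons]
    simp only [Function.comp_def, filter_eq', card_replicate,
      count_eq_of_nodup (p.2.erase p.1).nodup, Finset.mem_val]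
    split_ifs <;> simp [add_comm]

namespace IsEulerRooting

variable {E : Multiset (Finset α)} {F : Multiset (α × Finset α)}

theorem snd_mem (hF : IsEulerRooting E F) {p : α × Finset α} (hp : p ∈ F) : p.2 ∈ E :=
  hF.1 ▸ mem_map_of_mem _ hp

theorem mhDegree_eq_sum_card (hF : IsEulerRooting E F) (v : α) :
    mhDegree E v = ((F.filter fun p => p.1 = v).map fun p => p.2.card).sum := by
  obtain ⟨hmap, hroot, hbal, -⟩ := hF
  have hdeg : mhDegree E v = (F.filter fun p => v ∈ p.2).card := by
    rw [mhDegree, ← hmap, filter_map, card_map]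
    rfl
  have hsplit : (F.filter fun p => v ∈ p.2).card =
      (F.filter fun p => p.1 = v).card + (F.filter fun p => v ∈ p.2.erase p.1).card := by
    rw [← filter_add_not (fun p => p.1 = v) (F.filter fun p => v ∈ p.2), card_add,
      filter_filter, filter_filter]
    congr 2 <;> refine filter_congr fun p hp => ?_
    · exact ⟨And.left, fun h => ⟨h, h ▸ hroot p hp⟩⟩
    · rw [Finset.mem_erase, ne_comm]
  have hsum : ((F.filter fun p => p.1 = v).map fun p => p.2.card).sum =
      ((F.filter fun p => p.1 = v).map fun p => (p.2.erase p.1).card).sum +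
        (F.filter fun p => p.1 = v).card := by
    rw [map_congr rfl fun p hp =>
        (Finset.card_erase_add_one (hroot p (mem_of_mem_filter hp))).symm,
      sum_map_add, map_const', sum_replicate, smul_eq_mul, mul_one]
  rw [hdeg, hsplit, hsum, ← card_filter_fst_rootingArcs, hbal, card_filter_snd_rootingArcs,
    add_comm]

theorem mhDegree_eq_mul {m : ℕ} (hF : IsEulerRooting E F) (huni : ∀ e ∈ E, e.card = m)
    (v : α) : mhDegree E v = m * (F.filter fun p => p.1 = v).card := by
  rw [hF.mhDegree_eq_sum_card,
    map_congr rfl fun p hp => huni p.2 (hF.snd_mem (mem_of_mem_filter hp)), map_const',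
    sum_replicate, smul_eq_mul, mul_comm]

end IsEulerRooting

theorem mhDegree_eq_count {E : Multiset (Finset α)} {v : α} {e : Finset α} (hv : v ∈ e)
    (hsole : ∀ f ∈ E, v ∈ f → f = e) : mhDegree E v = E.count e := by
  rw [mhDegree, count_eq_card_filter_eq]
  exact congrArg card <| filter_congr fun f hf =>
    ⟨fun hvf => (hsole f hf hvf).symm, fun hef => hef ▸ hv⟩

theorem card_filter_fst_eq_count {F : Multiset (α × Finset α)} {v : α} {e : Finset α}
    (h : ∀ p ∈ F, p.1 = v → p.2 = e) : (F.filter fun p => p.1 = v).card = F.count (v, e) := by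
  rw [count_eq_card_filter_eq]
  exact congrArg card <| filter_congr fun p hp =>
    ⟨fun hpv => Prod.ext hpv.symm (h p hp hpv).symm, fun hvp => hvp ▸ rfl⟩

end

theorem veblen_cored_edge_multiplicity_general {α : Type*} [DecidableEq α] (m : ℕ)
    (E : Multiset (Finset α)) (huni : ∀ e ∈ E, e.card = m)
    (F : Multiset (α × Finset α)) (hF : IsEulerRooting E F)
    (e : Finset α) (he : e ∈ E.toFinset)
    (hcored : ∃ v ∈ e, (E.toFinset.filter fun f => v ∈ f).card = 1) :
    ∃ k : ℕ, 0 < k ∧ E.count e = k * m ∧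
      ∀ v ∈ e, (E.toFinset.filter fun f => v ∈ f).card = 1 → F.count (v, e) = k := by
  have heE : e ∈ E := Multiset.mem_toFinset.mp he
  have key : ∀ v ∈ e, (E.toFinset.filter fun f => v ∈ f).card = 1 →
      E.count e = m * F.count (v, e) := by
    intro v hv hcard
    have hsole : ∀ f ∈ E, v ∈ f → f = e := fun f hf hvf =>
      Finset.card_le_one.mp hcard.le f (by simpa using ⟨hf, hvf⟩) e
        (by simpa using ⟨heE, hv⟩)
    rw [← mhDegree_eq_count hv hsole, hF.mhDegree_eq_mul huni, card_filter_fst_eq_count]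
    exact fun p hp hpv => hsole p.2 (hF.snd_mem hp) (hpv ▸ hF.2.1 p hp)
  obtain ⟨v₀, hv₀, hcard₀⟩ := hcored
  have hm : 0 < m := huni e heE ▸ Finset.card_pos.mpr ⟨v₀, hv₀⟩
  refine ⟨F.count (v₀, e), ?_, by rw [key v₀ hv₀ hcard₀, mul_comm],
    fun v hv hcard => ?_⟩
  · exact Nat.pos_of_mul_pos_left (key v₀ hv₀ hcard₀ ▸ Multiset.count_pos.mpr heE)
  · exact Nat.eq_of_mul_eq_mul_left hm ((key v hv hcard).symm.trans (key v₀ hv₀ hcard₀))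

/-- Let `H` be an `m`-uniform Veblen (i.e. `m`-valent) multi-hypergraph admitting an
Euler rooting, and let `e` be an edge of the underlying hypergraph containing a cored
vertex (a vertex lying in only one distinct edge). Then the multiplicity of `e` is `k·m`
for some positive integer `k`, and in any Euler rooting every cored vertex of `e` occurs
as a root of `e` exactly `k` times. -/
theorem veblen_cored_edge_multiplicity {α : Type*} [DecidableEq α] (m : ℕ) (hm : 2 ≤ m)
    (E : Multiset (Finset α)) (huni : ∀ e ∈ E, e.card = m)
    (hval : ∀ v ∈ mhVerts E, m ∣ mhDegree E v)
    (F : Multiset (α × Finset α)) (hF : IsEulerRooting E F)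
    (e : Finset α) (he : e ∈ E.toFinset)
    (hcored : ∃ v ∈ e, (E.toFinset.filter fun f => v ∈ f).card = 1) :
    ∃ k : ℕ, 0 < k ∧ E.count e = k * m ∧
      ∀ v ∈ e, (E.toFinset.filter fun f => v ∈ f).card = 1 → F.count (v, e) = k :=
  veblen_cored_edge_multiplicity_general m E huni F hF e he hcored
end

section
/- Let x, y be positive integers and let w1, w2, w3 be positive integers. Then (x+y+w1+w3−1)!·(w1+w2−1)! + (x+y+w1+w2−1)!·(w1+w3−1)! > (x+w1+w3−1)!·(y+w1+w2−1)! + (x+w1+w2−1)!·(y+w1+w3−1)!. -/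
/-!
Write `A k = (a + 1)(a + 2)⋯(a + k)` and `B k = (b + 1)⋯(b + k)` for the rising factorials, so
that `(k + a)! = a! A k` and `(k + b)! = b! B k`; after dividing by `a! b!` the inequality reads
`A x B y + B x A y < A (x + y) + B (x + y)`. For `b ≤ a` we have `B ≤ A` pointwise, so by the
rearrangement inequality the left side is at most `A x A y + B x B y`. Finally rising factorials
are supermultiplicative, `A x A y ≤ A x · (a + x + 1)⋯(a + x + y) = A (x + y)`, strictly so for
`x, y > 0`.
-/

namespace Nat

theorem ascFactorial_pos_of_pos {n : ℕ} (hn : 0 < n) (k : ℕ) : 0 < n.ascFactorial k :=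
  lt_of_lt_of_le (pow_pos hn k) (pow_succ_le_ascFactorial n k)

theorem ascFactorial_lt_ascFactorial_s15 {n m k : ℕ} (hnm : n < m) (hk : 0 < k) :
    n.ascFactorial k < m.ascFactorial k := by
  obtain ⟨k, rfl⟩ : ∃ j, k = j + 1 := ⟨k - 1, by omega⟩
  rw [ascFactorial_succ, ascFactorial_succ]
  exact Nat.mul_lt_mul_of_lt_of_le (by omega) (ascFactorial_le k hnm.le)
    (ascFactorial_pos_of_pos (by omega) k)

theorem ascFactorial_mul_ascFactorial_le (n x y : ℕ) :
    n.ascFactorial x * n.ascFactorial y ≤ n.ascFactorial (x + y) := by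
  rw [← ascFactorial_mul_ascFactorial]
  gcongr
  omega

theorem ascFactorial_mul_ascFactorial_lt {n x y : ℕ} (hn : 0 < n) (hx : 0 < x) (hy : 0 < y) :
    n.ascFactorial x * n.ascFactorial y < n.ascFactorial (x + y) := by
  rw [← ascFactorial_mul_ascFactorial]
  exact Nat.mul_lt_mul_of_pos_left (ascFactorial_lt_ascFactorial_s15 (by omega) hy)
    (ascFactorial_pos_of_pos hn x)

theorem ascFactorial_mul_add_mul_lt {m n x y : ℕ} (hmn : m ≤ n) (hn : 0 < n) (hx : 0 < x)
    (hy : 0 < y) :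
    n.ascFactorial x * m.ascFactorial y + m.ascFactorial x * n.ascFactorial y <
      n.ascFactorial (x + y) + m.ascFactorial (x + y) :=
  calc n.ascFactorial x * m.ascFactorial y + m.ascFactorial x * n.ascFactorial y
      ≤ n.ascFactorial x * n.ascFactorial y + m.ascFactorial x * m.ascFactorial y :=
        mul_add_mul_le_mul_add_mul' (ascFactorial_le x hmn) (ascFactorial_le y hmn)
    _ < n.ascFactorial (x + y) + m.ascFactorial (x + y) :=
        add_lt_add_of_lt_of_le (ascFactorial_mul_ascFactorial_lt hn hx hy)
          (ascFactorial_mul_ascFactorial_le m x y)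

theorem factorial_add_mul_factorial_add_lt (a b x y : ℕ) (hx : 0 < x) (hy : 0 < y) :
    (x + a)! * (y + b)! + (x + b)! * (y + a)! < (x + y + a)! * b ! + (x + y + b)! * a ! := by
  wlog hba : b ≤ a generalizing a b
  · have := this b a (by omega)
    omega
  have key := ascFactorial_mul_add_mul_lt (succ_le_succ hba) (succ_pos a) hx hy
  simp only [add_comm _ a, add_comm _ b, ← factorial_mul_ascFactorial]
  calc a ! * (a + 1).ascFactorial x * (b ! * (b + 1).ascFactorial y) +
        b ! * (b + 1).ascFactorial x * (a ! * (a + 1).ascFactorial y)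
      = a ! * b ! * ((a + 1).ascFactorial x * (b + 1).ascFactorial y +
          (b + 1).ascFactorial x * (a + 1).ascFactorial y) := by ring
    _ < a ! * b ! * ((a + 1).ascFactorial (x + y) + (b + 1).ascFactorial (x + y)) :=
        Nat.mul_lt_mul_of_pos_left key (by positivity)
    _ = a ! * (a + 1).ascFactorial (x + y) * b ! + b ! * (b + 1).ascFactorial (x + y) * a ! := by
        ring

end Nat

theorem factorial_cycle_weight_inequality_general (x y w1 w2 w3 : ℕ)
    (hx : 0 < x) (hy : 0 < y) (h1 : 0 < w1) :
    (x + y + w1 + w3 - 1).factorial * (w1 + w2 - 1).factorial +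
        (x + y + w1 + w2 - 1).factorial * (w1 + w3 - 1).factorial >
      (x + w1 + w3 - 1).factorial * (y + w1 + w2 - 1).factorial +
        (x + w1 + w2 - 1).factorial * (y + w1 + w3 - 1).factorial := by
  have shift (k w : ℕ) : k + w1 + w - 1 = k + (w1 + w - 1) := by omega
  rw [shift, shift, shift, shift, shift, shift]
  exact Nat.factorial_add_mul_factorial_add_lt _ _ x y hx hy

/-- Lemma 2.4 applied with `a = w1+w3−1` and `b = w1+w2−1`: for positive integers
`x, y, w1, w2, w3`,
`(x+y+w1+w3−1)!·(w1+w2−1)! + (x+y+w1+w2−1)!·(w1+w3−1)! >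
 (x+w1+w3−1)!·(y+w1+w2−1)! + (x+w1+w2−1)!·(y+w1+w3−1)!`. -/
theorem factorial_cycle_weight_inequality (x y w1 w2 w3 : ℕ)
    (hx : 0 < x) (hy : 0 < y) (h1 : 0 < w1) (h2 : 0 < w2) (h3 : 0 < w3) :
    (x + y + w1 + w3 - 1).factorial * (w1 + w2 - 1).factorial +
        (x + y + w1 + w2 - 1).factorial * (w1 + w3 - 1).factorial >
      (x + w1 + w3 - 1).factorial * (y + w1 + w2 - 1).factorial +
        (x + w1 + w2 - 1).factorial * (y + w1 + w3 - 1).factorial :=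
  factorial_cycle_weight_inequality_general x y w1 w2 w3 hx hy h1
end

section
/- For positive integers x, y and positive integers p, q, the 'symmetric sum' inequality holds: (x+y+p−1)!·(q−1)! + (x+y+q−1)!·(p−1)! > (x+p−1)!·(y+q−1)! + (x+q−1)!·(y+p−1)!, and consequently, summing over all pairs (p,q) with p+q = s fixed (s ≥ 2), Σ_{p+q=s, p,q≥1} (x+y+p−1)!·(q−1)! > Σ_{p+q=s, p,q≥1} (x+p−1)!·(y+q−1)!. -/
lemma asc_mono (k : ℕ) : ∀ {n m : ℕ}, n ≤ m → n.ascFactorial k ≤ m.ascFactorial k := by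
  induction k with
  | zero => intro n m h; simp
  | succ k ih => intro n m h
                 rw [Nat.ascFactorial_succ, Nat.ascFactorial_succ]
                 exact Nat.mul_le_mul (by omega) (ih h)

lemma asc_pos (n k : ℕ) (hn : 0 < n) : 0 < n.ascFactorial k := by
  induction k with
  | zero => simp
  | succ k ih => rw [Nat.ascFactorial_succ]; exact Nat.mul_pos (by omega) ih

lemma asc_strict (k n m : ℕ) (hk : 0 < k) (hn : 0 < n) (h : n < m) :
    n.ascFactorial k < m.ascFactorial k := by
  obtain ⟨k, rfl⟩ : ∃ j, k = j + 1 := ⟨k - 1, by omega⟩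
  rw [Nat.ascFactorial_succ, Nat.ascFactorial_succ]
  exact Nat.mul_lt_mul_of_lt_of_le (by omega) (asc_mono k h.le) (asc_pos _ _ (by omega))

lemma int_key (c1 c2 A B C D : ℤ) (h1 : 1 ≤ c1) (h12 : c1 ≤ c2) (hDA : D < A)
    (hBC : B ≤ C) (hDC : D < C) : c1 * B + c2 * D < c1 * A + c2 * C := by
  nlinarith [mul_nonneg (by linarith : (0:ℤ) ≤ c2 - c1) (by linarith : (0:ℤ) ≤ C - D),
    mul_pos (by linarith : (0:ℤ) < c1) (by linarith : (0:ℤ) < A - D + (C - B))]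

lemma key_half (x y a b : ℕ) (hx : 0 < x) (hy : 0 < y) (hab : a ≤ b) :
    (x + a).factorial * (y + b).factorial + (x + b).factorial * (y + a).factorial <
      (x + y + a).factorial * b.factorial + (x + y + b).factorial * a.factorial := by
  -- c1 = (x+a)! * b!, c2 = (x+b)! * a!
  set A := (x + a + 1).ascFactorial y with hA
  set B := (b + 1).ascFactorial y with hB
  set C := (x + b + 1).ascFactorial y with hC
  set D := (a + 1).ascFactorial y with hD
  have e1 : (x + y + a).factorial = (x + a).factorial * A := by
    rw [hA, Nat.factorial_mul_ascFactorial]; ring_nf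
  have e2 : (x + y + b).factorial = (x + b).factorial * C := by
    rw [hC, Nat.factorial_mul_ascFactorial]; ring_nf
  have e3 : (y + b).factorial = b.factorial * B := by
    rw [hB, Nat.factorial_mul_ascFactorial]; ring_nf
  have e4 : (y + a).factorial = a.factorial * D := by
    rw [hD, Nat.factorial_mul_ascFactorial]; ring_nf
  rw [e1, e2, e3, e4]
  have hc : (x + a).factorial * b.factorial ≤ (x + b).factorial * a.factorial := by
    obtain ⟨k, rfl⟩ : ∃ k, b = a + k := ⟨b - a, by omega⟩
    have h1 : (x + (a + k)).factorial = (x + a).factorial * (x + a + 1).ascFactorial k := by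
      rw [Nat.factorial_mul_ascFactorial]; ring_nf
    have h2 : (a + k).factorial = a.factorial * (a + 1).ascFactorial k := by
      rw [Nat.factorial_mul_ascFactorial]
    rw [h1, h2]
    calc (x + a).factorial * (a.factorial * (a + 1).ascFactorial k)
        ≤ (x + a).factorial * (a.factorial * (x + a + 1).ascFactorial k) := by
          exact Nat.mul_le_mul_left _ (Nat.mul_le_mul_left _ (asc_mono k (by omega)))
      _ = (x + a).factorial * (x + a + 1).ascFactorial k * a.factorial := by ring
  have hc1 : 1 ≤ (x + a).factorial * b.factorial :=
    Nat.one_le_iff_ne_zero.mpr (Nat.mul_ne_zero (Nat.factorial_ne_zero _) (Nat.factorial_ne_zero _))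
  have hDA : D < A := asc_strict y _ _ hy (by omega) (by omega)
  have hBC : B ≤ C := asc_mono y (by omega)
  have hDC : D < C := asc_strict y _ _ hy (by omega) (by omega)
  have := int_key ((x + a).factorial * b.factorial : ℤ) ((x + b).factorial * a.factorial)
    A B C D (by exact_mod_cast hc1) (by exact_mod_cast hc) (by exact_mod_cast hDA)
    (by exact_mod_cast hBC) (by exact_mod_cast hDC)
  have goal : ((x + a).factorial : ℤ) * (b.factorial * B) + (x + b).factorial * (a.factorial * D)
      < (x + a).factorial * A * b.factorial + (x + b).factorial * C * a.factorial := by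
    linarith [this]
  exact_mod_cast (by push_cast; linarith : ((x + a).factorial * (b.factorial * B) +
    (x + b).factorial * (a.factorial * D) : ℤ) <
    ((x + a).factorial * A * b.factorial + (x + b).factorial * C * a.factorial : ℤ))

lemma key (x y a b : ℕ) (hx : 0 < x) (hy : 0 < y) :
    (x + a).factorial * (y + b).factorial + (x + b).factorial * (y + a).factorial <
      (x + y + a).factorial * b.factorial + (x + y + b).factorial * a.factorial := by
  rcases le_total a b with h | h
  · exact key_half x y a b hx hy h
  · have := key_half x y b a hx hy h
    omega

/-- The "symmetric sum" inequality: for positive integers `x, y` and positive integers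
`p, q`, `(x+y+p−1)!·(q−1)! + (x+y+q−1)!·(p−1)! > (x+p−1)!·(y+q−1)! + (x+q−1)!·(y+p−1)!`;
consequently, summing over ordered pairs `(p,q)` of positive integers with `p + q = s`
(`s ≥ 2` fixed), `Σ (x+y+p−1)!·(q−1)! > Σ (x+p−1)!·(y+q−1)!`. -/
theorem symmetric_sum_inequality (x y : ℕ) (hx : 0 < x) (hy : 0 < y) :
    (∀ p q : ℕ, 0 < p → 0 < q →
      (x + y + p - 1).factorial * (q - 1).factorial +
          (x + y + q - 1).factorial * (p - 1).factorial >
        (x + p - 1).factorial * (y + q - 1).factorial +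
          (x + q - 1).factorial * (y + p - 1).factorial) ∧
    ∀ s : ℕ, 2 ≤ s →
      ∑ pq ∈ ((Finset.HasAntidiagonal.antidiagonal s)).filter (fun pq => 1 ≤ pq.1 ∧ 1 ≤ pq.2),
          (x + y + pq.1 - 1).factorial * (pq.2 - 1).factorial >
        ∑ pq ∈ ((Finset.HasAntidiagonal.antidiagonal s)).filter (fun pq => 1 ≤ pq.1 ∧ 1 ≤ pq.2),
          (x + pq.1 - 1).factorial * (y + pq.2 - 1).factorial := by
  have main : ∀ p q : ℕ, 0 < p → 0 < q →
      (x + y + p - 1).factorial * (q - 1).factorial +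
          (x + y + q - 1).factorial * (p - 1).factorial >
        (x + p - 1).factorial * (y + q - 1).factorial +
          (x + q - 1).factorial * (y + p - 1).factorial := by
    intro p q hp hq
    obtain ⟨a, rfl⟩ : ∃ a, p = a + 1 := ⟨p - 1, by omega⟩
    obtain ⟨b, rfl⟩ : ∃ b, q = b + 1 := ⟨q - 1, by omega⟩
    simp only [Nat.add_sub_cancel]
    exact key x y a b hx hy
  refine ⟨main, ?_⟩
  intro s hs
  set T := ((Finset.HasAntidiagonal.antidiagonal s)).filter (fun pq => 1 ≤ pq.1 ∧ 1 ≤ pq.2) with hT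
  have hswap : ∀ (f : ℕ → ℕ → ℕ), ∑ pq ∈ T, f pq.1 pq.2 = ∑ pq ∈ T, f pq.2 pq.1 := by
    intro f
    apply Finset.sum_nbij' (fun pq => Prod.swap pq) (fun pq => Prod.swap pq) <;>
      simp [hT, Finset.mem_filter, Finset.mem_antidiagonal, and_comm] <;> omega
  have hne : T.Nonempty := ⟨(1, s - 1), by
    simp [hT, Finset.mem_filter, Finset.mem_antidiagonal]; omega⟩
  have hlt : ∑ pq ∈ T, ((x + pq.1 - 1).factorial * (y + pq.2 - 1).factorial +
        (x + pq.2 - 1).factorial * (y + pq.1 - 1).factorial) <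
      ∑ pq ∈ T, ((x + y + pq.1 - 1).factorial * (pq.2 - 1).factorial +
        (x + y + pq.2 - 1).factorial * (pq.1 - 1).factorial) := by
    apply Finset.sum_lt_sum_of_nonempty hne
    intro pq hpq
    have hmem := Finset.mem_filter.mp (hT ▸ hpq)
    exact main pq.1 pq.2 hmem.2.1 hmem.2.2
  rw [Finset.sum_add_distrib, Finset.sum_add_distrib] at hlt
  have e1 := hswap (fun p q => (x + p - 1).factorial * (y + q - 1).factorial)
  have e2 := hswap (fun p q => (x + y + p - 1).factorial * (q - 1).factorial)
  beta_reduce at e1 e2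
  omega
end
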